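/- arXiv:2302.08465 — 5 statements merged into one kernel-verified Lean document; each statement's English description precedes it below -/
import Mathlib

section
/- Let $l$ be a positive integer and let $A$ be a finite set of integers with $\{0, l\} \subseteq A \subseteq [0, l]$ and $\gcd(A) = 1$. If there is a proper subgroup $H < \mathbb{Z}/l\mathbb{Z}$ such that the image of $A$ under the composite homomorphism $\mathbb{Z} \to \mathbb{Z}/l\mathbb{Z} \to (\mathbb{Z}/l\mathbb{Z})/H$ is Freiman-isomorphic to a set of integers, then the additive dimension of $A$ is at least $2$. -/
open Finset Pointwise

/-- The arithmetic progression `{a, a+d, ..., a+(k-1)d}` as a set. -/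
def apSet {G : Type*} [AddMonoid G] (a d : G) (k : ℕ) : Set G :=
  {x | ∃ i < k, x = a + i • d}

/-- The arithmetic progression `{a, a+d, ..., a+(k-1)d}` as a finset. -/
def apFinset {G : Type*} [AddMonoid G] [DecidableEq G] (a d : G) (k : ℕ) : Finset G :=
  (Finset.range k).image (fun i => a + i • d)

/-- A Freiman isomorphism of order 2 between `A` and `B`. -/
def IsFreimanIso2 {α β : Type*} [Add α] [Add β] (A : Set α) (B : Set β) : Prop :=
  ∃ f : α → β, Set.BijOn f A B ∧
    ∀ a₁ ∈ A, ∀ a₂ ∈ A, ∀ a₃ ∈ A, ∀ a₄ ∈ A,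
      (a₁ + a₂ = a₃ + a₄ ↔ f a₁ + f a₂ = f a₃ + f a₄)

/-- A set is rectifiable if it is Freiman isomorphic (of order 2) to a set of integers. -/
def Rectifiable {α : Type*} [Add α] (A : Set α) : Prop :=
  ∃ B : Set ℤ, IsFreimanIso2 A B

/-- `A ⊆ ℤ` is Freiman isomorphic to a subset of `ℤ^d` not contained in an
affine hyperplane. -/
def HasFreimanDim (A : Set ℤ) (d : ℕ) : Prop :=
  ∃ B : Set (Fin d → ℤ), IsFreimanIso2 A B ∧
    ¬ ∃ (c : Fin d → ℝ) (t : ℝ), c ≠ 0 ∧ ∀ x ∈ B, ∑ i, c i * (x i : ℝ) = t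

/-- The additive dimension of a finite set of integers: the largest `d` such that `A` is
Freiman isomorphic to a subset of `ℤ^d` not contained in an affine hyperplane. -/
noncomputable def addDim (A : Set ℤ) : ℕ := sSup {d | HasFreimanDim A d}

/-- Non-normalized Fourier transform of the indicator function of `A ⊆ ℤ/pℤ`,
evaluated at the character `x ↦ e(xb/p)`. -/
noncomputable def dft {p : ℕ} (A : Finset (ZMod p)) (b : ZMod p) : ℂ :=
  ∑ a ∈ A, Complex.exp (2 * Real.pi * Complex.I * ((a * b).val : ℕ) / p)

/-- `η_A`: the maximal normalized nontrivial Fourier coefficient of `A`. -/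
noncomputable def eta {p : ℕ} (A : Finset (ZMod p)) : ℝ :=
  sSup {r | ∃ b : ZMod p, b ≠ 0 ∧ r = ‖dft A b‖ / A.card}


lemma exists_hyperplane {d : ℕ} (B : Set (Fin d → ℤ)) (hfin : B.Finite)
    (hcard : B.ncard ≤ d) (x₀ : Fin d → ℤ) (hx₀ : x₀ ∈ B) :
    ∃ (c : Fin d → ℝ) (t : ℝ), c ≠ 0 ∧ ∀ x ∈ B, ∑ i, c i * (x i : ℝ) = t := by
  classical
  set e : (Fin d → ℤ) → (Fin d → ℝ) := fun x i => (x i : ℝ) with he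
  set s : Finset (Fin d → ℝ) := hfin.toFinset.image e with hs
  have hy₀ : e x₀ ∈ s := Finset.mem_image_of_mem e (hfin.mem_toFinset.2 hx₀)
  set s' : Finset (Fin d → ℝ) := (s.erase (e x₀)).image (· - e x₀) with hs'
  have hscard : s.card ≤ d := by
    refine le_trans (Finset.card_image_le.trans ?_) hcard
    rw [Set.ncard_eq_toFinset_card B hfin]
  have hs'card : s'.card < d := by
    have h1 : s'.card ≤ (s.erase (e x₀)).card := Finset.card_image_le
    have h2 : (s.erase (e x₀)).card < s.card := Finset.card_erase_lt_of_mem hy₀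
    have h3 : 1 ≤ s.card := Finset.card_pos.mpr ⟨_, hy₀⟩
    omega
  set W : Submodule ℝ (Fin d → ℝ) := Submodule.span ℝ (s' : Set (Fin d → ℝ)) with hW
  have hWlt : W < ⊤ := by
    apply Submodule.lt_top_of_finrank_lt_finrank
    calc Module.finrank ℝ W ≤ s'.card := finrank_span_finset_le_card s'
    _ < d := hs'card
    _ = Module.finrank ℝ (Fin d → ℝ) := (Module.finrank_fin_fun (R := ℝ)).symm
  obtain ⟨φ, hφne, hφbot⟩ := Submodule.exists_dual_map_eq_bot_of_lt_top hWlt inferInstance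
  have hφW : ∀ w ∈ W, φ w = 0 := by
    intro w hw
    have : φ w ∈ W.map φ := Submodule.mem_map_of_mem hw
    rwa [hφbot, Submodule.mem_bot] at this
  refine ⟨fun i => φ (fun j => if i = j then 1 else 0), φ (e x₀), ?_, ?_⟩
  · intro hc
    apply hφne
    refine LinearMap.ext fun x => ?_
    rw [pi_eq_sum_univ x, map_sum]
    simp only [map_smul, smul_eq_mul]
    have : ∀ i, φ (fun j => if i = j then (1:ℝ) else 0) = 0 := fun i => congrFun hc i
    simp [this]
  · intro x hx
    have hex : e x ∈ s := Finset.mem_image_of_mem e (hfin.mem_toFinset.2 hx)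
    have hmem : e x - e x₀ ∈ W := by
      by_cases h : e x = e x₀
      · rw [h, sub_self]; exact W.zero_mem
      · exact Submodule.subset_span (Finset.mem_image_of_mem _ (Finset.mem_erase.2 ⟨h, hex⟩))
    have h1 : φ (e x) = φ (e x₀) := by
      have := hφW _ hmem
      rw [map_sub] at this
      linarith
    calc ∑ i, φ (fun j => if i = j then (1:ℝ) else 0) * (x i : ℝ)
        = φ (e x) := by
          conv_rhs => rw [pi_eq_sum_univ (e x)]
          rw [map_sum]
          simp only [map_smul, smul_eq_mul]
          exact Finset.sum_congr rfl fun i _ => by rw [mul_comm]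
    _ = φ (e x₀) := h1

theorem stmt1 (l : ℕ) (hl : 0 < l) (A : Finset ℤ)
    (h0 : (0 : ℤ) ∈ A) (hlA : (l : ℤ) ∈ A) (hsub : A ⊆ Finset.Icc 0 (l : ℤ))
    (hgcd : A.gcd id = 1)
    (H : AddSubgroup (ZMod l)) (hH : H ≠ ⊤)
    (hrect : Rectifiable ((fun z : ℤ => (QuotientAddGroup.mk' H) (z : ZMod l)) '' ↑A)) :
    2 ≤ addDim ↑A := by
  classical
  haveI : NeZero l := ⟨hl.ne'⟩
  set q : ℤ → (ZMod l) ⧸ H := fun z : ℤ => (QuotientAddGroup.mk' H) (z : ZMod l) with hqdef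
  -- Key fact: not all of A maps into H
  have hnotall : ¬ ∀ a ∈ A, (a : ZMod l) ∈ H := by
    intro hall
    apply hH
    set K : AddSubgroup ℤ := AddSubgroup.comap (Int.castAddHom (ZMod l)) H with hK
    obtain ⟨g, hg⟩ := Int.subgroup_cyclic K
    have hdvd : ∀ a ∈ A, g ∣ id a := by
      intro a ha
      have haK : a ∈ K := by
        simp only [hK, AddSubgroup.mem_comap, Int.coe_castAddHom]
        exact hall a ha
      rw [hg, AddSubgroup.mem_closure_singleton] at haK
      obtain ⟨n, hn⟩ := haK
      simp only [id_eq]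
      have hna : a = g * n := by rw [← hn, zsmul_eq_mul, Int.cast_id, mul_comm]
      exact hna ▸ dvd_mul_right g n
    have hg1 : g ∣ 1 := by
      have := Finset.dvd_gcd hdvd
      rwa [hgcd] at this
    have h1K : (1 : ℤ) ∈ K := by
      rw [hg, AddSubgroup.mem_closure_singleton]
      rcases Int.isUnit_iff.1 (isUnit_of_dvd_one hg1) with h | h
      · exact ⟨1, by simp [h]⟩
      · exact ⟨-1, by simp [h]⟩
    have h1H : (1 : ZMod l) ∈ H := by
      simpa [hK, AddSubgroup.mem_comap, Int.coe_castAddHom] using h1K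
    ext x
    simp only [AddSubgroup.mem_top, iff_true]
    have hx : x = x.val • (1 : ZMod l) := by
      rw [nsmul_eq_mul, mul_one, ZMod.natCast_val, ZMod.cast_id]
    rw [hx]
    exact AddSubgroup.nsmul_mem H h1H _
  -- get the rectification map
  obtain ⟨Bq, f, hfbij, hfadd⟩ := hrect
  -- q is additive and q l = q 0
  have hq_add : ∀ x y : ℤ, q (x + y) = q x + q y := by
    intro x y; simp only [hqdef, Int.cast_add, map_add]
  have hql0 : q (l : ℤ) = q 0 := by
    have : ((l : ℤ) : ZMod l) = ((0 : ℤ) : ZMod l) := by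
      push_cast
      simp [ZMod.natCast_self]
    simp only [hqdef, this]
  -- the 2-dimensional embedding
  set g : ℤ → (Fin 2 → ℤ) := fun a i => if i = 0 then a else f (q a) with hgdef
  have hg0 : ∀ a, g a 0 = a := fun a => by simp [hgdef]
  have hg1 : ∀ a, g a 1 = f (q a) := fun a => by simp [hgdef]
  have hqmem : ∀ a ∈ A, q a ∈ (fun z : ℤ => (QuotientAddGroup.mk' H) (z : ZMod l)) '' ↑A :=
    fun a ha => ⟨a, ha, rfl⟩
  have h2 : HasFreimanDim ↑A 2 := by
    refine ⟨g '' ↑A, ⟨g, ?_, ?_⟩, ?_⟩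
    · refine Set.InjOn.bijOn_image ?_
      intro a ha a' ha' h
      have := congrFun h 0
      simpa [hg0] using this
    · intro a₁ ha₁ a₂ ha₂ a₃ ha₃ a₄ ha₄
      constructor
      · intro h
        funext i
        simp only [Pi.add_apply]
        rcases Fin.exists_fin_two.mp ⟨i, rfl⟩ with h' | h'
        all_goals subst h'
        · simpa [hg0] using h
        · rw [hg1, hg1, hg1, hg1]
          refine (hfadd (q a₁) (hqmem _ ha₁) (q a₂) (hqmem _ ha₂) (q a₃) (hqmem _ ha₃)
            (q a₄) (hqmem _ ha₄)).mp ?_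
          rw [← hq_add, ← hq_add, h]
      · intro h
        have := congrFun h 0
        simpa [hg0] using this
    · rintro ⟨c, t, hc, hct⟩
      have key : ∀ a ∈ A, c 0 * (a : ℝ) + c 1 * ((f (q a) : ℤ) : ℝ) = t := by
        intro a ha
        have := hct (g a) ⟨a, ha, rfl⟩
        rwa [Fin.sum_univ_two, hg0, hg1] at this
      have k0 := key 0 h0
      have kl := key (l : ℤ) hlA
      rw [hql0] at kl
      have hc0 : c 0 = 0 := by
        have hlne : ((l : ℤ) : ℝ) ≠ 0 := by exact_mod_cast (Nat.cast_pos.mpr hl).ne'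
        have : c 0 * ((l : ℤ) : ℝ) = 0 := by push_cast at k0 kl ⊢; linarith
        exact (mul_eq_zero.mp this).resolve_right hlne
      have hc1 : c 1 ≠ 0 := by
        intro hc1
        apply hc
        funext i
        rcases Fin.exists_fin_two.mp ⟨i, rfl⟩ with h' | h'
        all_goals subst h'
        · exact hc0
        · exact hc1
      apply hnotall
      intro a ha
      have hfa : ((f (q a) : ℤ) : ℝ) = ((f (q 0) : ℤ) : ℝ) := by
        have h1 := key a ha
        rw [hc0] at h1 k0
        simp only [zero_mul, zero_add] at h1 k0
        exact mul_left_cancel₀ hc1 (h1.trans k0.symm)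
      have hfa' : f (q a) = f (q 0) := by exact_mod_cast hfa
      have hqa : q a = q 0 := hfbij.injOn (hqmem a ha) (hqmem 0 h0) hfa'
      have hq00 : q 0 = 0 := by simp [hqdef]
      rw [hq00] at hqa
      exact (QuotientAddGroup.eq_zero_iff _).mp hqa
  -- boundedness of the dimension set
  have hbdd : BddAbove {d | HasFreimanDim ↑A d} := by
    refine ⟨A.card, fun d hd => ?_⟩
    obtain ⟨B, ⟨f', hbij, _⟩, hnohyp⟩ := hd
    by_contra hcon
    push_neg at hcon
    apply hnohyp
    have hBeq : B = f' '' ↑A := hbij.image_eq.symm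
    refine exists_hyperplane B (hBeq ▸ (A.finite_toSet.image f')) ?_ (f' 0) ?_
    · rw [hBeq]
      calc (f' '' ↑A).ncard ≤ (↑A : Set ℤ).ncard := Set.ncard_image_le A.finite_toSet
      _ = A.card := Set.ncard_coe_finset A
      _ ≤ d := by omega
    · exact hbij.mapsTo h0
  exact le_csSup hbdd h2
end

section
/- For any finite nonempty set $A$ of integers with additive dimension $d = \dim(A)$, we have $|A+A| \ge (d+1)|A| - \binom{d+1}{2}$. -/
open Finset Pointwise

open Module
set_option linter.unusedSectionVars false



section Helpers

/-- factor lemma for image cards -/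
lemma card_image_le_card_image_of_forall {α β γ : Type*} [DecidableEq β] [DecidableEq γ]
    (s : Finset α) (g : α → β) (h : α → γ)
    (H : ∀ p ∈ s, ∀ q ∈ s, h p = h q → g p = g q) :
    (s.image g).card ≤ (s.image h).card := by
  classical
  rcases s.eq_empty_or_nonempty with rfl | ⟨a₀, ha₀⟩
  · simp
  have hex : ∀ b ∈ s.image g, ∃ a ∈ s, g a = b := fun b hb => Finset.mem_image.mp hb
  set F : β → γ := fun b => if hb : ∃ a ∈ s, g a = b then h hb.choose else h a₀ with hF
  apply Finset.card_le_card_of_injOn F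
  · intro b hb
    obtain ⟨a, ha, hab⟩ := hex b hb
    have hbex : ∃ a ∈ s, g a = b := ⟨a, ha, hab⟩
    have hspec := hbex.choose_spec
    simp only [hF, dif_pos hbex]
    exact Finset.mem_image_of_mem h hspec.1
  · intro b₁ hb₁ b₂ hb₂ hFb
    obtain ⟨a₁, ha₁, hab₁⟩ := hex b₁ (by exact_mod_cast hb₁)
    obtain ⟨a₂, ha₂, hab₂⟩ := hex b₂ (by exact_mod_cast hb₂)
    have hbex₁ : ∃ a ∈ s, g a = b₁ := ⟨a₁, ha₁, hab₁⟩
    have hbex₂ : ∃ a ∈ s, g a = b₂ := ⟨a₂, ha₂, hab₂⟩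
    have hs₁ := hbex₁.choose_spec
    have hs₂ := hbex₂.choose_spec
    simp only [hF, dif_pos hbex₁, dif_pos hbex₂] at hFb
    have := H _ hs₁.1 _ hs₂.1 hFb
    rw [hs₁.2, hs₂.2] at this
    exact this

/-- existence of a maximum for a total transitive relation -/
lemma exists_rel_max {α : Type*} [DecidableEq α] (lt : α → α → Prop)
    (htot : ∀ a b, a ≠ b → lt a b ∨ lt b a)
    (htr : ∀ {a b c : α}, lt a b → lt b c → lt a c)
    (B : Finset α) (hB : B.Nonempty) : ∃ v ∈ B, ∀ a ∈ B, a ≠ v → lt a v := by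
  classical
  induction B using Finset.induction_on with
  | empty => exact absurd hB (by simp)
  | @insert u B' huB ih =>
    rcases B'.eq_empty_or_nonempty with rfl | hB'
    · exact ⟨u, by simp, by simp⟩
    · obtain ⟨v, hv, hmax⟩ := ih hB'
      have huv : u ≠ v := fun h => huB (h ▸ hv)
      rcases htot u v huv with h | h
      · refine ⟨v, Finset.mem_insert_of_mem hv, ?_⟩
        intro a ha hav
        rcases Finset.mem_insert.mp ha with rfl | ha'
        · exact h
        · exact hmax a ha' hav
      · refine ⟨u, Finset.mem_insert_self u B', ?_⟩
        intro a ha hau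
        rcases Finset.mem_insert.mp ha with rfl | ha'
        · exact absurd rfl hau
        · by_cases hav : a = v
          · exact hav ▸ h
          · exact htr (hmax a ha' hav) h

end Helpers


variable {V : Type*} [AddCommGroup V] [Module ℝ V]

/-- Descent lemma: every element of a finite set of "negative" vectors lies in the span
of those elements that are not sums of two elements. -/
lemma descent_span [DecidableEq V] (lt : V → V → Prop)
    (htr : ∀ {a b c : V}, lt a b → lt b c → lt a c)
    (hadd : ∀ a b c : V, lt a b → lt (a + c) (b + c))
    (hir : ∀ a : V, ¬ lt a a)
    (S : Finset V) (hneg : ∀ s ∈ S, lt s 0) :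
    ∀ s ∈ S, s ∈ Submodule.span ℝ ((S.filter (fun t => t ∉ S + S)) : Set V) := by
  classical
  suffices key : ∀ k : ℕ, ∀ s ∈ S, (S.filter (fun u => lt s u)).card ≤ k →
      s ∈ Submodule.span ℝ ((S.filter (fun t => t ∉ S + S)) : Set V) by
    exact fun s hs => key S.card s hs (Finset.card_le_card (Finset.filter_subset _ _))
  intro k
  induction k with
  | zero =>
    intro s hs hk
    by_cases hss : s ∈ S + S
    · exfalso
      obtain ⟨s₁, hs₁, s₂, hs₂, h12⟩ := Finset.mem_add.mp hss
      have hlt1 : lt s s₁ := by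
        have := hadd s₂ 0 s₁ (hneg s₂ hs₂)
        rw [zero_add, add_comm] at this
        rw [← h12]
        exact this
      have : s₁ ∈ S.filter (fun u => lt s u) := Finset.mem_filter.mpr ⟨hs₁, hlt1⟩
      have := Finset.card_pos.mpr ⟨s₁, this⟩
      omega
    · exact Submodule.subset_span (by
        simp only [Finset.coe_filter, Set.mem_setOf_eq]
        exact ⟨hs, hss⟩)
  | succ k ih =>
    intro s hs hk
    by_cases hss : s ∈ S + S
    · obtain ⟨s₁, hs₁, s₂, hs₂, h12⟩ := Finset.mem_add.mp hss
      have hlt1 : lt s s₁ := by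
        have := hadd s₂ 0 s₁ (hneg s₂ hs₂)
        rw [zero_add, add_comm] at this
        rw [← h12]; exact this
      have hlt2 : lt s s₂ := by
        have := hadd s₁ 0 s₂ (hneg s₁ hs₁)
        rw [zero_add] at this
        rw [← h12]; exact this
      have hcard : ∀ t, t ∈ S → lt s t → (S.filter (fun u => lt t u)).card ≤ k := by
        intro t ht hst
        have hsub : S.filter (fun u => lt t u) ⊂ S.filter (fun u => lt s u) := by
          refine Finset.ssubset_iff_of_subset (fun u hu => ?_) |>.mpr ?_
          · obtain ⟨huS, hlt⟩ := Finset.mem_filter.mp hu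
            exact Finset.mem_filter.mpr ⟨huS, htr hst hlt⟩
          · exact ⟨t, Finset.mem_filter.mpr ⟨ht, hst⟩, fun hcon =>
              hir t (Finset.mem_filter.mp hcon).2⟩
        have := Finset.card_lt_card hsub
        omega
      have m1 := ih s₁ hs₁ (hcard s₁ hs₁ hlt1)
      have m2 := ih s₂ hs₂ (hcard s₂ hs₂ hlt2)
      rw [← h12]
      exact Submodule.add_mem _ m1 m2
    · exact Submodule.subset_span (by
        simp only [Finset.coe_filter, Set.mem_setOf_eq]
        exact ⟨hs, hss⟩)


variable {V : Type*} [AddCommGroup V] [Module ℝ V]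

lemma image_sub_eq_add_singleton [DecidableEq V] (s : Finset V) (u : V) :
    s.image (fun x => x - u) = s + {-u} := by
  ext x
  simp only [Finset.mem_image, Finset.mem_add, Finset.mem_singleton]
  constructor
  · rintro ⟨a, ha, rfl⟩
    exact ⟨a, ha, -u, rfl, (sub_eq_add_neg a u).symm⟩
  · rintro ⟨a, ha, b, rfl, rfl⟩
    exact ⟨a, ha, sub_eq_add_neg a u⟩

lemma addself_image_sub [DecidableEq V] (B : Finset V) (w : V) :
    (B.image (fun x => x - w)) + (B.image (fun x => x - w))
      = (B + B).image (fun x => x - (w + w)) := by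
  rw [image_sub_eq_add_singleton, image_sub_eq_add_singleton,
    add_add_add_comm, Finset.singleton_add_singleton]
  congr 2
  rw [neg_add]

lemma sub_injective (u : V) : Function.Injective (fun x : V => x - u) := by
  intro x y h
  simpa using congrArg (· + u) h

lemma vectorSpan_image_sub [DecidableEq V] (B : Finset V) (w : V) :
    vectorSpan ℝ ((B.image (fun x => x - w)) : Set V) = vectorSpan ℝ (B : Set V) := by
  rw [Finset.coe_image]
  show Submodule.span ℝ (((fun x => x - w) '' ↑B) -ᵥ ((fun x => x - w) '' ↑B))
      = Submodule.span ℝ ((B : Set V) -ᵥ (B : Set V))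
  congr 1
  ext x
  simp only [Set.mem_vsub, Set.mem_image, vsub_eq_sub]
  constructor
  · rintro ⟨a, ⟨a', ha', rfl⟩, b, ⟨b', hb', rfl⟩, rfl⟩
    exact ⟨a', ha', b', hb', (sub_sub_sub_cancel_right a' b' w).symm⟩
  · rintro ⟨a, ha, b, hb, rfl⟩
    exact ⟨a - w, ⟨a, ha, rfl⟩, b - w, ⟨b, hb, rfl⟩, sub_sub_sub_cancel_right a b w⟩

/-- when `0 ∈ B`, the span of `B.erase 0` is the vector span of `B`. -/
lemma span_erase_zero [DecidableEq V] {B : Finset V} (h0 : (0:V) ∈ B) :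
    Submodule.span ℝ ((B.erase 0 : Finset V) : Set V) = vectorSpan ℝ (B : Set V) := by
  have h1 : vectorSpan ℝ (B : Set V)
      = Submodule.span ℝ ((fun x => x -ᵥ (0:V)) '' (B : Set V)) :=
    vectorSpan_eq_span_vsub_set_right ℝ (Finset.mem_coe.mpr h0)
  have h2 : (fun x => x -ᵥ (0:V)) '' (B : Set V) = (B : Set V) := by
    ext x
    simp [vsub_eq_sub, sub_zero]
  have h3 : (B : Set V) = insert 0 ((B.erase 0 : Finset V) : Set V) := by
    rw [← Finset.coe_insert, Finset.insert_erase h0]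
  rw [h1, h2, h3, Submodule.span_insert_zero]

theorem freiman_dim_lemma {V : Type*} [AddCommGroup V] [Module ℝ V] [FiniteDimensional ℝ V]
    [DecidableEq V]
    (lt : V → V → Prop) (hir : ∀ a : V, ¬ lt a a)
    (htot : ∀ a b : V, a ≠ b → lt a b ∨ lt b a)
    (htr : ∀ {a b c : V}, lt a b → lt b c → lt a c)
    (hadd : ∀ a b c : V, lt a b → lt (a + c) (b + c))
    (B : Finset V) :
    (finrank ℝ (vectorSpan ℝ (B : Set V)) + 1) * B.card ≤
      (B + B).card + Nat.choose (finrank ℝ (vectorSpan ℝ (B : Set V)) + 1) 2 := by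
  classical
  suffices H : ∀ n : ℕ, ∀ B : Finset V, B.card = n →
      (finrank ℝ (vectorSpan ℝ (B : Set V)) + 1) * B.card ≤
        (B + B).card + Nat.choose (finrank ℝ (vectorSpan ℝ (B : Set V)) + 1) 2 from
    H B.card B rfl
  intro n
  induction n using Nat.strong_induction_on with
  | _ n IH =>
  intro B hBcard
  rcases B.eq_empty_or_nonempty with rfl | hBne
  · simp
  -- translate so that the maximum element becomes 0
  obtain ⟨v, hvB, hmaxB⟩ := exists_rel_max lt htot (fun {a b c} => htr) B hBne
  set C : Finset V := B.image (fun x => x - v) with hC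
  have hCcard : C.card = n := by
    rw [hC, Finset.card_image_of_injective _ (sub_injective v), hBcard]
  have hCC : (C + C).card = (B + B).card := by
    rw [hC, addself_image_sub, Finset.card_image_of_injective _ (sub_injective (v + v))]
  have hCspan : vectorSpan ℝ (C : Set V) = vectorSpan ℝ (B : Set V) := by
    rw [hC]; exact vectorSpan_image_sub B v
  rw [← hCspan, ← hCC, hBcard, ← hCcard]
  -- properties of C
  have h0C : (0 : V) ∈ C := by rw [hC]; exact Finset.mem_image.mpr ⟨v, hvB, sub_self v⟩
  have hnegC : ∀ c ∈ C, c ≠ 0 → lt c 0 := by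
    intro c hc hc0
    rw [hC] at hc
    obtain ⟨a, ha, rfl⟩ := Finset.mem_image.mp hc
    have hav : a ≠ v := fun h => hc0 (by rw [h, sub_self])
    have h1 := hadd a v (-v) (hmaxB a ha hav)
    have h3 : v + -v = 0 := by abel
    rw [h3] at h1
    rw [sub_eq_add_neg]
    exact h1
  by_cases hn1 : n = 1
  · -- C = {0}
    subst hn1
    obtain ⟨w, hw⟩ := Finset.card_eq_one.mp hCcard
    have hw0 : w = 0 := by
      have := h0C
      rw [hw, Finset.mem_singleton] at this
      exact this.symm
    rw [hw, hw0]
    rw [Finset.singleton_add_singleton, add_zero, Finset.coe_singleton, vectorSpan_singleton]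
    simp [Nat.choose]
  have hn2 : 2 ≤ n := by
    have : 0 < n := hCcard ▸ Finset.card_pos.mpr ⟨0, h0C⟩
    omega
  set B' := C.erase 0 with hB'
  have h0B' : (0 : V) ∉ B' := Finset.notMem_erase _ _
  have hB'card : B'.card = n - 1 := by rw [hB', Finset.card_erase_of_mem h0C, hCcard]
  have hB'ne : B'.Nonempty := by rw [← Finset.card_pos, hB'card]; omega
  have hB'sub : B' ⊆ C := Finset.erase_subset _ _
  have hnegB' : ∀ s ∈ B', lt s 0 := fun s hs =>
    hnegC s (hB'sub hs) (Finset.ne_of_mem_erase hs)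
  set d := finrank ℝ (vectorSpan ℝ (C : Set V)) with hd
  set d' := finrank ℝ (vectorSpan ℝ (B' : Set V)) with hd'
  have hspan' : Submodule.span ℝ (B' : Set V) = vectorSpan ℝ (C : Set V) := by
    rw [hB']; exact span_erase_zero h0C
  have hd'le : d' ≤ d :=
    Submodule.finrank_mono (vectorSpan_mono ℝ (Finset.coe_subset.mpr hB'sub))
  have hIH := IH (n - 1) (by omega) B' hB'card
  rw [hB'card, ← hd'] at hIH
  -- lower bound on the number of "non-sum" elements
  set T := B'.filter (fun t => t ∉ B' + B') with hT
  have hdT : d ≤ T.card := by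
    have hsub : (B' : Set V) ⊆ (Submodule.span ℝ (T : Set V) : Set V) := by
      intro s hs
      exact descent_span lt (fun {a b c} => htr) hadd hir B' hnegB' s (Finset.mem_coe.mp hs)
    have hle : Submodule.span ℝ (B' : Set V) ≤ Submodule.span ℝ (T : Set V) :=
      Submodule.span_le.mpr hsub
    have h1 : d ≤ finrank ℝ (Submodule.span ℝ (T : Set V)) := by
      rw [hd, ← hspan']
      exact Submodule.finrank_mono hle
    exact h1.trans (finrank_span_finset_le_card T)
  rcases eq_or_lt_of_le hd'le with hdd | hdd
  · -- case d' = d : at least d + 1 new sums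
    have hkey : (B' + B').card + T.card + 1 ≤ (C + C).card := by
      have hsub : ((B' + B') ∪ T) ∪ {0} ⊆ C + C := by
        intro x hx
        rcases Finset.mem_union.mp hx with hx | hx
        · rcases Finset.mem_union.mp hx with hx | hx
          · exact Finset.add_subset_add hB'sub hB'sub hx
          · have hxB' := (Finset.mem_filter.mp hx).1
            exact Finset.mem_add.mpr ⟨x, hB'sub hxB', 0, h0C, add_zero x⟩
        · rw [Finset.mem_singleton.mp hx]
          exact Finset.mem_add.mpr ⟨0, h0C, 0, h0C, add_zero 0⟩
      have hd1 : Disjoint (B' + B') T := by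
        rw [Finset.disjoint_right]
        intro t ht
        exact (Finset.mem_filter.mp ht).2
      have hd2 : Disjoint ((B' + B') ∪ T) ({0} : Finset V) := by
        rw [Finset.disjoint_right]
        intro x hx
        rw [Finset.mem_singleton] at hx
        subst hx
        intro hx0
        rcases Finset.mem_union.mp hx0 with h | h
        · obtain ⟨b, hb, c, hc, hbc⟩ := Finset.mem_add.mp h
          have h1 : lt (b + c) c := by
            have := hadd b 0 c (hnegB' b hb)
            rwa [zero_add] at this
          have h2 : lt (b + c) 0 := htr h1 (hnegB' c hc)
          rw [hbc] at h2
          exact hir 0 h2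
        · exact h0B' ((Finset.mem_filter.mp h).1)
      have hcards := Finset.card_le_card hsub
      rwa [Finset.card_union_of_disjoint hd2, Finset.card_union_of_disjoint hd1,
        Finset.card_singleton] at hcards
    rw [hdd] at hIH
    obtain ⟨m, rfl⟩ : ∃ m, n = m + 1 := ⟨n - 1, by omega⟩
    simp only [Nat.add_sub_cancel] at hIH
    rw [hCcard]
    have e : (d + 1) * (m + 1) = (d + 1) * m + (d + 1) := by ring
    rw [e]
    linarith [hIH, hkey, hdT]
  · -- case d' < d : all n translates 0 + C are new sums
    obtain ⟨b₀, hb₀⟩ := hB'ne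
    have hins : (C : Set V) = insert 0 ((B' : Finset V) : Set V) := by
      rw [hB', ← Finset.coe_insert, Finset.insert_erase h0C]
    have hv0 : (0 : V) ∉ affineSpan ℝ ((B' : Finset V) : Set V) := by
      intro h0aff
      have hveq : vectorSpan ℝ (C : Set V) = vectorSpan ℝ ((B' : Finset V) : Set V) := by
        rw [hins]
        exact vectorSpan_insert_eq_vectorSpan h0aff
      have : d = d' := by rw [hd, hd', hveq]
      omega
    have hb₀aff : b₀ ∈ affineSpan ℝ ((B' : Finset V) : Set V) :=
      subset_affineSpan ℝ _ (Finset.mem_coe.mpr hb₀)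
    have hnm : (0 : V) - b₀ ∉ vectorSpan ℝ ((B' : Finset V) : Set V) := by
      intro hmem
      apply hv0
      rw [← direction_affineSpan ℝ ((B' : Finset V) : Set V)] at hmem
      exact (AffineSubspace.vsub_right_mem_direction_iff_mem hb₀aff (0 : V)).mp hmem
    obtain ⟨φ, hφ0, hφmap⟩ := Submodule.exists_dual_map_eq_bot_of_notMem hnm inferInstance
    have hker : ∀ w ∈ vectorSpan ℝ ((B' : Finset V) : Set V), φ w = 0 := by
      intro w hw
      have h1 : φ w ∈ (vectorSpan ℝ ((B' : Finset V) : Set V)).map φ :=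
        Submodule.mem_map_of_mem hw
      rw [hφmap] at h1
      exact (Submodule.mem_bot ℝ).mp h1
    have htne : φ b₀ ≠ 0 := by
      intro h
      apply hφ0
      rw [zero_sub, map_neg, h, neg_zero]
    have hφB' : ∀ a ∈ B', φ a = φ b₀ := by
      intro a ha
      have h1 := hker (a - b₀) (vsub_mem_vectorSpan ℝ (Finset.mem_coe.mpr ha) (Finset.mem_coe.mpr hb₀))
      rw [map_sub] at h1
      linarith
    have hdisj : Disjoint (B' + B') C := by
      rw [Finset.disjoint_left]
      intro x hx hxC
      obtain ⟨b, hb, c, hc, rfl⟩ := Finset.mem_add.mp hx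
      have hφx : φ (b + c) = φ b₀ + φ b₀ := by rw [map_add, hφB' b hb, hφB' c hc]
      have hxins : b + c ∈ insert (0 : V) B' := by
        rw [hB', Finset.insert_erase h0C]
        exact hxC
      rcases Finset.mem_insert.mp hxins with h | h
      · rw [h, map_zero] at hφx
        exact htne (by linarith)
      · rw [hφB' _ h] at hφx
        exact htne (by linarith)
    have hkey : (B' + B').card + n ≤ (C + C).card := by
      have hsub : (B' + B') ∪ C ⊆ C + C := by
        intro x hx
        rcases Finset.mem_union.mp hx with hx | hx
        · exact Finset.add_subset_add hB'sub hB'sub hx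
        · exact Finset.mem_add.mpr ⟨x, hx, 0, h0C, add_zero x⟩
      have h2 := Finset.card_le_card hsub
      rwa [Finset.card_union_of_disjoint hdisj, hCcard] at h2
    have hb₀ne : b₀ ≠ 0 := fun h => h0B' (h ▸ hb₀)
    have hd1 : d ≤ d' + 1 := by
      have hsub2 : ((B' : Finset V) : Set V) ⊆
          (vectorSpan ℝ ((B' : Finset V) : Set V) ⊔ Submodule.span ℝ {b₀} : Submodule ℝ V) := by
        intro a ha
        have h1 : a - b₀ ∈ vectorSpan ℝ ((B' : Finset V) : Set V) :=
          vsub_mem_vectorSpan ℝ ha (Finset.mem_coe.mpr hb₀)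
        have h2 : b₀ ∈ Submodule.span ℝ ({b₀} : Set V) := Submodule.mem_span_singleton_self b₀
        have h3 := Submodule.add_mem_sup h1 h2
        rwa [sub_add_cancel] at h3
      have hle2 : Submodule.span ℝ ((B' : Finset V) : Set V) ≤
          vectorSpan ℝ ((B' : Finset V) : Set V) ⊔ Submodule.span ℝ {b₀} :=
        Submodule.span_le.mpr hsub2
      calc d = finrank ℝ (Submodule.span ℝ ((B' : Finset V) : Set V)) := by rw [hd, ← hspan']
        _ ≤ finrank ℝ (vectorSpan ℝ ((B' : Finset V) : Set V) ⊔ Submodule.span ℝ {b₀} :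
              Submodule ℝ V) := Submodule.finrank_mono hle2
        _ ≤ d' + finrank ℝ (Submodule.span ℝ ({b₀} : Set V)) :=
              Submodule.finrank_add_le_finrank_add_finrank _ _
        _ ≤ d' + 1 := by rw [finrank_span_singleton hb₀ne]
    have hdd' : d = d' + 1 := by omega
    have hch : Nat.choose (d + 1) 2 = d' + 1 + Nat.choose (d' + 1) 2 := by
      rw [hdd', Nat.choose_succ_succ (d' + 1) 1, Nat.choose_one_right]
    obtain ⟨m, rfl⟩ : ∃ m, n = m + 1 := ⟨n - 1, by omega⟩
    simp only [Nat.add_sub_cancel] at hIH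
    rw [hCcard, hch, hdd']
    have e : (d' + 1 + 1) * (m + 1) = (d' + 1) * m + (d' + 1) + (m + 1) := by ring
    rw [e]
    linarith [hIH, hkey]

lemma exists_good_lt (m : ℕ) : ∃ lt : (Fin m → ℝ) → (Fin m → ℝ) → Prop,
    (∀ a, ¬ lt a a) ∧ (∀ a b, a ≠ b → lt a b ∨ lt b a) ∧
    (∀ {a b c}, lt a b → lt b c → lt a c) ∧ (∀ a b c, lt a b → lt (a + c) (b + c)) := by
  classical
  refine ⟨fun x y => ∃ i : Fin m, (∀ j : Fin m, j < i → x j = y j) ∧ x i < y i,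
    ?_, ?_, ?_, ?_⟩
  · rintro a ⟨i, -, hii⟩
    exact lt_irrefl _ hii
  · intro a b hab
    have hP : (Finset.univ.filter (fun i : Fin m => a i ≠ b i)).Nonempty := by
      by_contra h
      rw [Finset.not_nonempty_iff_eq_empty, Finset.filter_eq_empty_iff] at h
      exact hab (funext fun i => not_not.mp (h (Finset.mem_univ i)))
    set i₀ := (Finset.univ.filter (fun i : Fin m => a i ≠ b i)).min' hP with hi₀
    have hne : a i₀ ≠ b i₀ :=
      (Finset.mem_filter.mp ((Finset.univ.filter
        (fun i : Fin m => a i ≠ b i)).min'_mem hP)).2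
    have heq : ∀ j : Fin m, j < i₀ → a j = b j := by
      intro j hj
      by_contra hne'
      have : i₀ ≤ j := Finset.min'_le _ j (Finset.mem_filter.mpr ⟨Finset.mem_univ j, hne'⟩)
      exact absurd hj (not_lt.mpr this)
    rcases lt_or_gt_of_ne hne with h | h
    · exact Or.inl ⟨i₀, heq, h⟩
    · exact Or.inr ⟨i₀, fun j hj => (heq j hj).symm, h⟩
  · rintro a b c ⟨i, hi, hii⟩ ⟨k, hk, hkk⟩
    rcases lt_trichotomy i k with h | h | h
    · exact ⟨i, fun j hj => (hi j hj).trans (hk j (hj.trans h)), hii.trans_eq (hk i h)⟩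
    · subst h
      exact ⟨i, fun j hj => (hi j hj).trans (hk j hj), hii.trans hkk⟩
    · exact ⟨k, fun j hj => (hi j (hj.trans h)).trans (hk j hj), (hi k h).trans_lt hkk⟩
  · rintro a b c ⟨i, hi, hii⟩
    exact ⟨i, fun j hj => by simp [hi j hj], by simpa using hii⟩

lemma vectorSpan_top_of_no_hyperplane {k : ℕ} (Bf : Finset (Fin k → ℤ)) (hne : Bf.Nonempty)
    (hnh : ¬ ∃ (c : Fin k → ℝ) (t : ℝ), c ≠ 0 ∧
      ∀ x ∈ (Bf : Set (Fin k → ℤ)), ∑ i, c i * (x i : ℝ) = t) :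
    vectorSpan ℝ ((Bf.image (fun x (i : Fin k) => (x i : ℝ))
      : Finset (Fin k → ℝ)) : Set (Fin k → ℝ)) = ⊤ := by
  classical
  by_contra hne'
  set W := vectorSpan ℝ ((Bf.image (fun x (i : Fin k) => (x i : ℝ))
      : Finset (Fin k → ℝ)) : Set (Fin k → ℝ)) with hW
  have hlt : W < ⊤ := lt_top_iff_ne_top.mpr hne'
  obtain ⟨φ, hφ0, hφmap⟩ := Submodule.exists_dual_map_eq_bot_of_lt_top hlt inferInstance
  obtain ⟨x₀, hx₀⟩ := hne
  have hker : ∀ w ∈ W, φ w = 0 := by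
    intro w hw
    have h1 : φ w ∈ W.map φ := Submodule.mem_map_of_mem hw
    rw [hφmap] at h1
    exact (Submodule.mem_bot ℝ).mp h1
  set c : Fin k → ℝ := fun i => φ (fun j => if i = j then 1 else 0) with hc
  have hφeq : ∀ x : Fin k → ℝ, φ x = ∑ i, c i * x i := by
    intro x
    rw [LinearMap.pi_apply_eq_sum_univ φ x]
    exact Finset.sum_congr rfl fun i _ => by rw [smul_eq_mul, mul_comm, hc]
  have hc0 : c ≠ 0 := by
    intro h
    apply hφ0
    apply LinearMap.ext
    intro x
    rw [hφeq x, h]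
    simp
  apply hnh
  refine ⟨c, φ (fun i => (x₀ i : ℝ)), hc0, ?_⟩
  intro x hx
  have hmem1 : (fun i => (x i : ℝ)) ∈ Bf.image (fun x (i : Fin k) => (x i : ℝ)) :=
    Finset.mem_image_of_mem _ (Finset.mem_coe.mp hx)
  have hmem0 : (fun i => (x₀ i : ℝ)) ∈ Bf.image (fun x (i : Fin k) => (x i : ℝ)) :=
    Finset.mem_image_of_mem _ hx₀
  have hsubm : (fun i => (x i : ℝ)) - (fun i => (x₀ i : ℝ)) ∈ W := by
    rw [hW]
    exact vsub_mem_vectorSpan ℝ (Finset.mem_coe.mpr hmem1) (Finset.mem_coe.mpr hmem0)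
  have h2 := hker _ hsubm
  rw [map_sub] at h2
  rw [← hφeq]
  linarith

lemma hasFreimanDim_le_card {A : Finset ℤ} {k : ℕ} (h : HasFreimanDim ↑A k) :
    k ≤ A.card := by
  classical
  obtain ⟨B, ⟨f, hbij, hfr⟩, hnh⟩ := h
  have hBeq : B = ↑(A.image f) := by rw [Finset.coe_image]; exact hbij.image_eq.symm
  rcases A.eq_empty_or_nonempty with rfl | hA
  · by_contra hk
    push_neg at hk
    apply hnh
    refine ⟨fun j => if j = (⟨0, by omega⟩ : Fin k) then 1 else 0, 0, ?_, ?_⟩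
    · intro h0
      have := congrFun h0 (⟨0, by omega⟩ : Fin k)
      simp at this
    · intro x hx
      rw [hBeq] at hx
      simp at hx
  · set Bf := A.image f with hBf
    have hnh' : ¬ ∃ (c : Fin k → ℝ) (t : ℝ), c ≠ 0 ∧
        ∀ x ∈ (Bf : Set (Fin k → ℤ)), ∑ i, c i * (x i : ℝ) = t := hBeq ▸ hnh
    have htop := vectorSpan_top_of_no_hyperplane Bf (hA.image f) hnh'
    set Bℝ := Bf.image (fun x (i : Fin k) => (x i : ℝ)) with hBr
    obtain ⟨y₀, hy₀⟩ : Bℝ.Nonempty := (hA.image f).image _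
    set C := Bℝ.image (fun x => x - y₀) with hCdef
    have h0C : (0 : Fin k → ℝ) ∈ C :=
      Finset.mem_image.mpr ⟨y₀, hy₀, sub_self y₀⟩
    have hCspan : vectorSpan ℝ (C : Set (Fin k → ℝ)) = ⊤ := by
      rw [hCdef, vectorSpan_image_sub]; exact htop
    have hspan2 : Submodule.span ℝ ((C.erase 0 : Finset (Fin k → ℝ)) : Set (Fin k → ℝ)) = ⊤ := by
      rw [span_erase_zero h0C, hCspan]
    have h1 : k ≤ (C.erase 0).card := by
      have h2 : finrank ℝ (Submodule.span ℝ ((C.erase 0 : Finset (Fin k → ℝ))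
          : Set (Fin k → ℝ))) ≤ (C.erase 0).card :=
        finrank_span_finset_le_card (C.erase 0)
      rw [hspan2, finrank_top ℝ (Fin k → ℝ), Module.finrank_fin_fun ℝ] at h2
      exact h2
    have h3 : (C.erase 0).card ≤ C.card := Finset.card_le_card (Finset.erase_subset _ _)
    have h4 : C.card ≤ Bℝ.card := by rw [hCdef]; exact Finset.card_image_le
    have h5 : Bℝ.card ≤ Bf.card := by rw [hBr]; exact Finset.card_image_le
    have h6 : Bf.card ≤ A.card := by rw [hBf]; exact Finset.card_image_le
    omega

theorem stmt3 (A : Finset ℤ) (hA : A.Nonempty) :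
    (addDim ↑A + 1) * A.card ≤ (A + A).card + (addDim ↑A + 1).choose 2 := by
  classical
  rcases eq_or_ne (addDim ↑A) 0 with h0 | h0
  · rw [h0]
    have h1 : A.card ≤ (A + A).card := Finset.card_le_card_add_left hA
    have h2 : Nat.choose 1 2 = 0 := rfl
    omega
  · have hbdd : BddAbove {d | HasFreimanDim (↑A : Set ℤ) d} :=
      ⟨A.card, fun k hk => hasFreimanDim_le_card hk⟩
    have hne : {d | HasFreimanDim (↑A : Set ℤ) d}.Nonempty := by
      by_contra h
      rw [Set.not_nonempty_iff_eq_empty] at h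
      apply h0
      show sSup {d | HasFreimanDim (↑A : Set ℤ) d} = 0
      rw [h]
      simp [csSup_empty]
    have hd : HasFreimanDim (↑A : Set ℤ) (addDim ↑A) := Nat.sSup_mem hne hbdd
    set k := addDim (↑A : Set ℤ) with hk
    obtain ⟨B, ⟨f, hbij, hfr⟩, hnh⟩ := hd
    have hBeq : B = ↑(A.image f) := by rw [Finset.coe_image]; exact hbij.image_eq.symm
    set Bf := A.image f with hBf
    have hcard1 : Bf.card = A.card := Finset.card_image_of_injOn hbij.injOn
    have hsum : (Bf + Bf).card ≤ (A + A).card := by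
      have e1 : A + A = (A ×ˢ A).image (fun p : ℤ × ℤ => p.1 + p.2) :=
        Finset.image_add_product.symm
      have e2 : Bf + Bf = (A ×ˢ A).image (fun p : ℤ × ℤ => f p.1 + f p.2) := by
        ext x
        simp only [hBf, Finset.mem_add, Finset.mem_image, Finset.mem_product]
        constructor
        · rintro ⟨y, ⟨a, ha, rfl⟩, z, ⟨b, hb, rfl⟩, rfl⟩
          exact ⟨(a, b), ⟨ha, hb⟩, rfl⟩
        · rintro ⟨⟨a, b⟩, ⟨ha, hb⟩, rfl⟩
          exact ⟨f a, ⟨a, ha, rfl⟩, f b, ⟨b, hb, rfl⟩, rfl⟩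
      rw [e1, e2]
      apply card_image_le_card_image_of_forall
      intro p hp q hq hpq
      have hp' := Finset.mem_product.mp hp
      have hq' := Finset.mem_product.mp hq
      exact (hfr p.1 (Finset.mem_coe.mpr hp'.1) p.2 (Finset.mem_coe.mpr hp'.2)
        q.1 (Finset.mem_coe.mpr hq'.1) q.2 (Finset.mem_coe.mpr hq'.2)).mp hpq
    set ψ : (Fin k → ℤ) →+ (Fin k → ℝ) :=
      { toFun := fun x i => (x i : ℝ),
        map_zero' := by funext i; simp,
        map_add' := fun x y => by funext i; simp } with hψ
    have hψinj : Function.Injective ψ := by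
      intro x y hxy
      funext i
      have h2 : ((x i : ℤ) : ℝ) = ((y i : ℤ) : ℝ) := congrFun hxy i
      exact_mod_cast h2
    set Bℝ := Bf.image (fun x (i : Fin k) => (x i : ℝ)) with hBr
    have hBrψ : Bℝ = Bf.image ψ := rfl
    have hcard2 : Bℝ.card = A.card := by
      rw [hBrψ, Finset.card_image_of_injective _ hψinj, hcard1]
    have hsum2 : (Bℝ + Bℝ).card = (Bf + Bf).card := by
      rw [hBrψ, ← Finset.image_add ψ, Finset.card_image_of_injective _ hψinj]
    have hnh' : ¬ ∃ (c : Fin k → ℝ) (t : ℝ), c ≠ 0 ∧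
        ∀ x ∈ (Bf : Set (Fin k → ℤ)), ∑ i, c i * (x i : ℝ) = t := hBeq ▸ hnh
    have htop' : vectorSpan ℝ (Bℝ : Set (Fin k → ℝ)) = ⊤ :=
      vectorSpan_top_of_no_hyperplane Bf (hA.image f) hnh'
    obtain ⟨lt, hir, htot, htr, hadd⟩ := exists_good_lt k
    have hFL := freiman_dim_lemma lt hir htot (fun {a b c} => htr) hadd Bℝ
    rw [htop', finrank_top ℝ (Fin k → ℝ), Module.finrank_fin_fun ℝ, hcard2, hsum2] at hFL
    linarith [hFL, hsum]
end

section
/- Let $l > 0$ be an integer, let $A \subseteq \mathbb{Z}$ be finite with $\{0,l\} \subseteq A \subseteq [0,l]$, and let $\mathcal{A} = \phi_l(A) \subseteq \mathbb{Z}/l\mathbb{Z}$ be the image of $A$ under reduction modulo $l$. Then $|\mathcal{A}| = |A| - 1$ and $|A+A| \ge |\mathcal{A}+\mathcal{A}| + |A|$. -/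
open Finset Pointwise

theorem stmt12 (l : ℕ) (hl : 0 < l) (A : Finset ℤ)
    (h0 : (0 : ℤ) ∈ A) (hlA : (l : ℤ) ∈ A) (hsub : A ⊆ Finset.Icc 0 (l : ℤ))
    (𝒜 : Finset (ZMod l)) (h𝒜 : 𝒜 = A.image (fun z : ℤ => (z : ZMod l))) :
    𝒜.card = A.card - 1 ∧ (𝒜 + 𝒜).card + A.card ≤ (A + A).card := by
  classical
  have hl' : (0:ℤ) < l := by exact_mod_cast hl
  set f : ℤ → ZMod l := fun z => (z : ZMod l) with hf
  have hfl : f (l : ℤ) = 0 := by simp [f]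
  have hf0 : f 0 = 0 := by simp [f]
  have hinj : ∀ x ∈ Finset.Ico (0:ℤ) l, ∀ y ∈ Finset.Ico (0:ℤ) l, f x = f y → x = y := by
    intro x hx y hy hxy
    simp [Finset.mem_Ico] at hx hy
    have h1 : (x : ZMod l) = (y : ZMod l) := hxy
    rw [ZMod.intCast_eq_intCast_iff] at h1
    obtain ⟨k, hk⟩ := h1.dvd
    rcases lt_trichotomy k 0 with h | h | h
    · nlinarith
    · simp [h] at hk; omega
    · nlinarith
  have h0ne : (0:ℤ) ≠ l := by omega
  have h0' : (0:ℤ) ∈ A.erase l := Finset.mem_erase.mpr ⟨h0ne, h0⟩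
  have hsubIco : A.erase l ⊆ Finset.Ico 0 (l:ℤ) := by
    intro a ha
    have h1 := Finset.mem_of_mem_erase ha
    have h2 := hsub h1
    have h3 : a ≠ l := Finset.ne_of_mem_erase ha
    simp [Finset.mem_Icc] at h2
    simp [Finset.mem_Ico]
    omega
  have himg : A.image f = (A.erase l).image f := by
    conv_lhs => rw [(Finset.insert_erase hlA).symm]
    rw [Finset.image_insert]
    apply Finset.insert_eq_self.mpr
    rw [hfl, ← hf0]
    exact Finset.mem_image_of_mem f h0'
  have hcard𝒜 : 𝒜.card = A.card - 1 := by
    rw [h𝒜, himg,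
      Finset.card_image_of_injOn (fun x hx y hy => hinj x (hsubIco hx) y (hsubIco hy)),
      Finset.card_erase_of_mem hlA]
  refine ⟨hcard𝒜, ?_⟩
  have himg2 : 𝒜 + 𝒜 = (A + A).image f := by
    rw [h𝒜]
    exact (Finset.image_add (Int.castRingHom (ZMod l))).symm
  have hmaps : ∀ x ∈ A + A, f x ∈ 𝒜 + 𝒜 := by
    intro x hx; rw [himg2]; exact Finset.mem_image_of_mem f hx
  have hsum : (A+A).card = ∑ c ∈ 𝒜 + 𝒜, ((A+A).filter (fun x => f x = c)).card :=
    Finset.card_eq_sum_card_fiberwise hmaps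
  have h0𝒜 : (0 : ZMod l) ∈ 𝒜 := by
    rw [h𝒜]; rw [← hf0]; exact Finset.mem_image_of_mem f h0
  have h𝒜sub : 𝒜 ⊆ 𝒜 + 𝒜 := by
    intro c hc
    have := Finset.add_mem_add hc h0𝒜
    simpa using this
  -- fiber bounds
  have fib1 : ∀ c ∈ (𝒜 + 𝒜) \ 𝒜, 1 ≤ ((A+A).filter (fun x => f x = c)).card := by
    intro c hc
    have hc' := Finset.mem_sdiff.mp hc
    rw [himg2] at hc'
    obtain ⟨x, hx, rfl⟩ := Finset.mem_image.mp hc'.1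
    have : x ∈ (A+A).filter (fun x' => f x' = f x) := Finset.mem_filter.mpr ⟨hx, rfl⟩
    exact Finset.card_pos.mpr ⟨x, this⟩
  have fib2 : ∀ c ∈ 𝒜, 2 ≤ ((A+A).filter (fun x => f x = c)).card := by
    intro c hc
    rw [h𝒜] at hc
    obtain ⟨a, ha, rfl⟩ := Finset.mem_image.mp hc
    have h1 : a ∈ A + A := by
      have := Finset.add_mem_add ha h0; simpa using this
    have h2 : a + l ∈ A + A := Finset.add_mem_add ha hlA
    have hpair : ({a, a + l} : Finset ℤ) ⊆ (A+A).filter (fun x => f x = f a) := by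
      intro x hx
      simp only [Finset.mem_insert, Finset.mem_singleton] at hx
      rcases hx with rfl | rfl
      · exact Finset.mem_filter.mpr ⟨h1, rfl⟩
      · refine Finset.mem_filter.mpr ⟨h2, ?_⟩
        show ((a + l : ℤ) : ZMod l) = (a : ZMod l)
        push_cast
        simp [ZMod.natCast_self]
    have hle := Finset.card_le_card hpair
    have hcardpair : ({a, a+l} : Finset ℤ).card = 2 := by
      rw [Finset.card_insert_of_notMem (by simp; omega), Finset.card_singleton]
    omega
  have fib0 : 3 ≤ ((A+A).filter (fun x => f x = 0)).card := by
    have m0 : (0:ℤ) ∈ A + A := by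
      have := Finset.add_mem_add h0 h0; simpa using this
    have m1 : (l:ℤ) ∈ A + A := by
      have := Finset.add_mem_add h0 hlA; simpa using this
    have m2 : ((l:ℤ) + l) ∈ A + A := Finset.add_mem_add hlA hlA
    have htri : ({0, (l:ℤ), (l:ℤ)+l} : Finset ℤ) ⊆ (A+A).filter (fun x => f x = 0) := by
      intro x hx
      simp only [Finset.mem_insert, Finset.mem_singleton] at hx
      rcases hx with rfl | rfl | rfl
      · exact Finset.mem_filter.mpr ⟨m0, hf0⟩
      · exact Finset.mem_filter.mpr ⟨m1, hfl⟩
      · refine Finset.mem_filter.mpr ⟨m2, ?_⟩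
        show (((l:ℤ) + l : ℤ) : ZMod l) = 0
        push_cast
        simp [ZMod.natCast_self]
    have hle := Finset.card_le_card htri
    have : ({0, (l:ℤ), (l:ℤ)+l} : Finset ℤ).card = 3 := by
      rw [Finset.card_insert_of_notMem (by simp; omega),
        Finset.card_insert_of_notMem (by simp; omega), Finset.card_singleton]
    omega
  -- assemble
  have hsplit : ∑ c ∈ 𝒜 + 𝒜, ((A+A).filter (fun x => f x = c)).card
      = ∑ c ∈ (𝒜 + 𝒜) \ 𝒜, ((A+A).filter (fun x => f x = c)).card
        + ∑ c ∈ 𝒜, ((A+A).filter (fun x => f x = c)).card :=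
    (Finset.sum_sdiff h𝒜sub).symm
  have hb1 : ((𝒜 + 𝒜) \ 𝒜).card * 1 ≤ ∑ c ∈ (𝒜 + 𝒜) \ 𝒜, ((A+A).filter (fun x => f x = c)).card := by
    simpa using Finset.card_nsmul_le_sum _ _ 1 fib1
  have hb2 : ∑ c ∈ 𝒜, ((A+A).filter (fun x => f x = c)).card
      ≥ (𝒜.card - 1) * 2 + 3 := by
    rw [Finset.sum_eq_sum_sdiff_singleton_add h0𝒜]
    have h1 : (𝒜 \ {0}).card * 2 ≤ ∑ c ∈ 𝒜 \ {0}, ((A+A).filter (fun x => f x = c)).card := by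
      simpa using Finset.card_nsmul_le_sum _ _ 2 (fun c hc => fib2 c (Finset.mem_sdiff.mp hc).1)
    have h2 : (𝒜 \ {0}).card = 𝒜.card - 1 := by
      rw [Finset.sdiff_singleton_eq_erase, Finset.card_erase_of_mem h0𝒜]
    omega
  have hsd : ((𝒜 + 𝒜) \ 𝒜).card = (𝒜 + 𝒜).card - 𝒜.card := Finset.card_sdiff_of_subset h𝒜sub
  have hle𝒜 : 𝒜.card ≤ (𝒜 + 𝒜).card := Finset.card_le_card h𝒜sub
  have hA2 : 2 ≤ A.card := by
    have : ({0, (l:ℤ)} : Finset ℤ) ⊆ A := by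
      intro x hx
      simp only [Finset.mem_insert, Finset.mem_singleton] at hx
      rcases hx with rfl | rfl
      · exact h0
      · exact hlA
    have hle := Finset.card_le_card this
    have : ({0, (l:ℤ)} : Finset ℤ).card = 2 := by
      rw [Finset.card_insert_of_notMem (by simp; omega), Finset.card_singleton]
    omega
  have h𝒜pos : 1 ≤ 𝒜.card := by omega
  omega
end

section
/- Let $p$ be an odd prime, let $0 \le l \le (p-1)/2$ be an integer, and let $\mathcal{A} \subseteq \mathbb{Z}/p\mathbb{Z}$. Suppose $\mathcal{A}_0 = \mathcal{A} \cap \phi_p([0,l])$ is a subset of $\mathcal{A}$ of maximal size among all subsets of $\mathcal{A}$ contained in an arithmetic progression with at most $(p+1)/2$ terms. Then $\mathcal{A} \setminus \mathcal{A}_0 \subseteq \phi_p([(p-1)/2 + 1, (p-1)/2 + l])$. -/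
open Finset Pointwise

theorem stmt17 (p : ℕ) [Fact p.Prime] (hodd : Odd p) (l : ℕ) (hl : l ≤ (p - 1) / 2)
    (A A₀ : Finset (ZMod p))
    (hA₀ : A₀ = A ∩ (Finset.range (l + 1)).image (Nat.cast : ℕ → ZMod p))
    (hmax : ∀ B ⊆ A,
      (∃ (a d : ZMod p) (k : ℕ), d ≠ 0 ∧ 2 * k ≤ p + 1 ∧ B ⊆ apFinset a d k) →
      B.card ≤ A₀.card) :
    A \ A₀ ⊆ (Finset.Icc ((p - 1) / 2 + 1) ((p - 1) / 2 + l)).image (Nat.cast : ℕ → ZMod p) := by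
  have hp : p.Prime := Fact.out
  haveI : NeZero p := ⟨hp.ne_zero⟩
  obtain ⟨t, ht⟩ := hodd
  intro x hx
  rw [Finset.mem_sdiff] at hx
  obtain ⟨hxA, hxA0⟩ := hx
  have hnp : x.val < p := ZMod.val_lt x
  set n := x.val with hn
  have hxcast : ((n : ℕ) : ZMod p) = x := ZMod.natCast_zmod_val x
  have hA0A : A₀ ⊆ A := by rw [hA₀]; exact Finset.inter_subset_left
  have hln : l < n := by
    by_contra h
    exact hxA0 (hA₀ ▸ Finset.mem_inter.mpr ⟨hxA,
      Finset.mem_image.mpr ⟨n, Finset.mem_range.mpr (by omega), hxcast⟩⟩)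
  have hkey : ∀ y ∈ A₀, ∃ m ≤ l, ((m : ℕ) : ZMod p) = y := by
    intro y hy
    rw [hA₀, Finset.mem_inter] at hy
    obtain ⟨m, hm, hmy⟩ := Finset.mem_image.mp hy.2
    exact ⟨m, by have := Finset.mem_range.mp hm; omega, hmy⟩
  have hcard : (insert x A₀).card = A₀.card + 1 := Finset.card_insert_of_notMem hxA0
  have hsub : insert x A₀ ⊆ A := Finset.insert_subset hxA hA0A
  have hone : (1 : ZMod p) ≠ 0 := one_ne_zero
  simp only [Finset.mem_image, Finset.mem_Icc]
  refine ⟨n, ?_, hxcast⟩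
  by_contra hcon
  have hmem : ∀ (a : ZMod p) (k i : ℕ), i < k → a + (i : ZMod p) ∈ apFinset a 1 k := by
    intro a k i hi
    refine Finset.mem_image.mpr ⟨i, Finset.mem_range.mpr hi, ?_⟩
    rw [nsmul_eq_mul, mul_one]
  have hcase : n ≤ (p - 1) / 2 ∨ (p - 1) / 2 + l + 1 ≤ n := by omega
  rcases hcase with hc | hc
  · have h1 : (insert x A₀).card ≤ A₀.card := by
      apply hmax _ hsub
      refine ⟨0, 1, n + 1, hone, by omega, ?_⟩
      intro y hy
      rcases Finset.mem_insert.mp hy with rfl | hy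
      · have := hmem 0 (n + 1) n (by omega)
        simpa [hxcast] using this
      · obtain ⟨m, hm, rfl⟩ := hkey y hy
        have := hmem 0 (n + 1) m (by omega)
        simpa using this
    omega
  · have h1 : (insert x A₀).card ≤ A₀.card := by
      apply hmax _ hsub
      refine ⟨(n : ZMod p), 1, p - n + l + 1, hone, by omega, ?_⟩
      intro y hy
      rcases Finset.mem_insert.mp hy with rfl | hy
      · have := hmem (n : ZMod p) (p - n + l + 1) 0 (by omega)
        simpa [hxcast] using this
      · obtain ⟨m, hm, rfl⟩ := hkey y hy
        have h2 := hmem (n : ZMod p) (p - n + l + 1) (p - n + m) (by omega)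
        have heq : ((n : ℕ) : ZMod p) + ((p - n + m : ℕ) : ZMod p) = ((m : ℕ) : ZMod p) := by
          rw [← Nat.cast_add]
          have h3 : n + (p - n + m) = p + m := by omega
          rw [h3, Nat.cast_add, ZMod.natCast_self, zero_add]
        rwa [heq] at h2
    omega
end

section
/- Let $p$ be a prime and let $\mathcal{A}, \mathcal{B} \subseteq \mathbb{Z}/p\mathbb{Z}$ be nonempty sets with $|\mathcal{A}| + |\mathcal{B}| \le p - 1$ and $|\mathcal{A}+\mathcal{B}| = |\mathcal{A}| + |\mathcal{B}| - 1$. If $\min(|\mathcal{A}|, |\mathcal{B}|) \ge 2$, then $\mathcal{A}$ and $\mathcal{B}$ are arithmetic progressions with the same common difference. -/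
open Finset Pointwise

namespace VosperAux

variable {p : ℕ} [hp : Fact p.Prime]

lemma mem_apFinset {G : Type*} [AddMonoid G] [DecidableEq G] {a d x : G} {k : ℕ} :
    x ∈ apFinset a d k ↔ ∃ i < k, x = a + i • d := by
  simp [apFinset, eq_comm]

lemma natCast_inj' {i j : ℕ} (hi : i < p) (hj : j < p) (h : (i : ZMod p) = j) : i = j := by
  haveI : NeZero p := ⟨hp.out.pos.ne'⟩
  have := congrArg ZMod.val h
  rwa [ZMod.val_cast_of_lt hi, ZMod.val_cast_of_lt hj] at this

lemma smul_cancel {i j : ℕ} {d : ZMod p} (hd : d ≠ 0) (hi : i < p) (hj : j < p)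
    (h : i • d = j • d) : i = j := by
  apply natCast_inj' hi hj
  have : ((i : ZMod p) - j) * d = 0 := by
    rw [sub_mul, sub_eq_zero]
    simpa [nsmul_eq_mul] using h
  rcases mul_eq_zero.1 this with h' | h'
  · exact sub_eq_zero.1 h'
  · exact absurd h' hd

lemma apFinset_card {a d : ZMod p} (hd : d ≠ 0) {k : ℕ} (hk : k ≤ p) :
    (apFinset a d k).card = k := by
  rw [apFinset, Finset.card_image_of_injOn, Finset.card_range]
  intro i hi j hj h
  simp only [Finset.mem_coe, Finset.mem_range] at hi hj
  exact smul_cancel hd (lt_of_lt_of_le hi hk) (lt_of_lt_of_le hj hk)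
    (by simpa using h)

/-- If a nonempty set is invariant under shift by `d ≠ 0`, it has `≥ p` elements. -/
lemma card_ge_of_shift_invariant {A : Finset (ZMod p)} {d : ZMod p} (hd : d ≠ 0)
    (hA : A.Nonempty) (h : A.image (· + d) = A) : p ≤ A.card := by
  obtain ⟨a, ha⟩ := hA
  have key : ∀ i : ℕ, a + i • d ∈ A := by
    intro i
    induction i with
    | zero => simpa using ha
    | succ n ih =>
      have h2 : (a + n • d) + d ∈ A.image (· + d) := Finset.mem_image_of_mem _ ih
      rw [h] at h2
      rw [succ_nsmul, ← add_assoc]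
      exact h2
  have hsub : apFinset a d p ⊆ A := by
    intro x hx
    obtain ⟨i, _, rfl⟩ := mem_apFinset.1 hx
    exact key i
  calc p = (apFinset a d p).card := (apFinset_card hd le_rfl).symm
    _ ≤ A.card := Finset.card_le_card hsub

lemma shift_eq_zero {A : Finset (ZMod p)} {d : ZMod p} (hA : A.Nonempty) (hcard : A.card < p)
    (h : A.image (· + d) = A) : d = 0 := by
  by_contra hd
  exact absurd (card_ge_of_shift_invariant hd hA h) (by omega)

lemma translate_inj {A : Finset (ZMod p)} {s t : ZMod p} (hA : A.Nonempty) (hcard : A.card < p)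
    (h : A.image (· + s) = A.image (· + t)) : s = t := by
  have h2 : A.image (· + (s - t)) = A := by
    have h3 := congrArg (fun S => Finset.image (· + (-t)) S) h
    simp only [Finset.image_image] at h3
    have e1 : ((· + (-t)) ∘ (· + s)) = (fun x : ZMod p => x + (s - t)) := by
      ext x; simp; ring
    have e2 : ((· + (-t)) ∘ (· + t)) = (fun x : ZMod p => x) := by
      ext x; simp
    rw [e1, e2] at h3
    simpa using h3
  exact sub_eq_zero.1 (shift_eq_zero hA hcard h2)

/-- Every element of `ZMod p` is `a0 + i • d` for some `i < p`, when `d ≠ 0`. -/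
lemma exists_smul_eq {d : ZMod p} (hd : d ≠ 0) (a0 x : ZMod p) :
    ∃ i < p, x = a0 + i • d := by
  haveI : NeZero p := ⟨hp.out.pos.ne'⟩
  refine ⟨((x - a0) * d⁻¹).val, ZMod.val_lt _, ?_⟩
  rw [nsmul_eq_mul, ZMod.natCast_val, ZMod.cast_id, mul_assoc, inv_mul_cancel₀ hd]
  ring

/-- Lemma 1: if `|A ∪ (A+d)| ≤ |A| + 1` then `A` is an AP with difference `d`. -/
lemma ap_of_small_boundary {A : Finset (ZMod p)} {d : ZMod p} (hd : d ≠ 0)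
    (hA : A.Nonempty) (hcard : A.card < p)
    (h : (A ∪ A.image (· + d)).card ≤ A.card + 1) :
    ∃ a, A = apFinset a d A.card := by
  set img := A.image (· + d) with himg
  have hinj : ∀ x ∈ A, ∀ y ∈ A, x + d = y + d → x = y := fun x _ y _ h => by
    exact add_right_cancel h
  have himgcard : img.card = A.card := Finset.card_image_of_injOn hinj
  have hdiff : (A \ img).card ≤ 1 := by
    have : A \ img = (A ∪ img) \ img := by rw [Finset.union_sdiff_right]
    rw [this, Finset.card_sdiff_of_subset (Finset.subset_union_right)]
    omega
  have hdiffne : (A \ img).Nonempty := by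
    rw [Finset.sdiff_nonempty]
    intro hsub
    have hAi : A = img := Finset.eq_of_subset_of_card_le hsub himgcard.le
    exact hd (shift_eq_zero hA hcard hAi.symm)
  obtain ⟨a0, ha0⟩ := hdiffne
  have hdiffeq : A \ img = {a0} := by
    apply Finset.eq_singleton_iff_unique_mem.2 ⟨ha0, fun x hx => ?_⟩
    by_contra hne
    have : 2 ≤ (A \ img).card := Finset.one_lt_card.2 ⟨x, hx, a0, ha0, hne⟩
    omega
  have ha0A : a0 ∈ A := (Finset.mem_sdiff.1 ha0).1
  have ha0n : a0 ∉ img := (Finset.mem_sdiff.1 ha0).2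
  set S := (Finset.range p).filter (fun i => a0 + i • d ∈ A) with hS
  -- image of S is A
  have hSimage : S.image (fun i => a0 + i • d) = A := by
    apply Finset.Subset.antisymm
    · intro x hx
      obtain ⟨i, hi, rfl⟩ := Finset.mem_image.1 hx
      exact (Finset.mem_filter.1 hi).2
    · intro x hx
      obtain ⟨i, hi, rfl⟩ := exists_smul_eq hd a0 x
      exact Finset.mem_image_of_mem _ (Finset.mem_filter.2 ⟨Finset.mem_range.2 hi, hx⟩)
  have hScard : S.card = A.card := by
    rw [← hSimage]
    exact (Finset.card_image_of_injOn (fun i hi j hj hij => by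
      have hi' := Finset.mem_range.1 (Finset.mem_filter.1 hi).1
      have hj' := Finset.mem_range.1 (Finset.mem_filter.1 hj).1
      exact smul_cancel hd hi' hj' (by simpa using hij))).symm
  -- down-closedness
  have hdown : ∀ i : ℕ, i + 1 ∈ S → i ∈ S := by
    intro i hi1
    have hi1r := Finset.mem_range.1 (Finset.mem_filter.1 hi1).1
    have hi1A := (Finset.mem_filter.1 hi1).2
    refine Finset.mem_filter.2 ⟨Finset.mem_range.2 (by omega), ?_⟩
    by_contra hni
    have hmem : a0 + (i+1) • d ∈ A \ img := by
      refine Finset.mem_sdiff.2 ⟨hi1A, fun hmem => ?_⟩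
      obtain ⟨y, hy, hy2⟩ := Finset.mem_image.1 hmem
      have : y = a0 + i • d := by
        have : y + d = (a0 + i • d) + d := by
          rw [hy2]; rw [succ_nsmul, ← add_assoc]
        exact add_right_cancel this
      exact hni (this ▸ hy)
    rw [hdiffeq, Finset.mem_singleton] at hmem
    have h0 : a0 + (i + 1) • d = a0 + (0:ℕ) • d := by simpa using hmem
    have := smul_cancel hd hi1r hp.out.pos (add_left_cancel h0)
    omega
  have hdownn : ∀ n i : ℕ, i + n ∈ S → i ∈ S := by
    intro n
    induction n with
    | zero => intro i h; simpa using h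
    | succ m ih => intro i h; exact ih i (hdown _ (by rwa [show i + m + 1 = i + (m+1) by omega]))
  have hSne : S.Nonempty := by
    rw [← Finset.card_pos, hScard]; exact Finset.card_pos.2 hA
  set M := S.max' hSne with hM
  have hSeq : S = Finset.range (M + 1) := by
    apply Finset.Subset.antisymm
    · intro i hi
      exact Finset.mem_range.2 (Nat.lt_succ_of_le (Finset.le_max' S i hi))
    · intro j hj
      have hjM := Nat.lt_succ_iff.1 (Finset.mem_range.1 hj)
      have hMS : M ∈ S := S.max'_mem hSne
      have : j + (M - j) ∈ S := by rwa [Nat.add_sub_cancel' hjM]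
      exact hdownn _ _ this
  have hMcard : M + 1 = A.card := by
    rw [← hScard, hSeq, Finset.card_range]
  refine ⟨a0, ?_⟩
  rw [← hMcard, ← hSimage, hSeq]
  rfl

lemma apFinset_image_add (a d t : ZMod p) (k : ℕ) :
    (apFinset a d k).image (· + t) = apFinset (a + t) d k := by
  ext x
  simp only [Finset.mem_image, mem_apFinset]
  constructor
  · rintro ⟨y, ⟨i, hi, rfl⟩, rfl⟩; exact ⟨i, hi, by ring⟩
  · rintro ⟨i, hi, rfl⟩; exact ⟨a + i • d, ⟨i, hi, rfl⟩, by ring⟩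

lemma apFinset_succ_eq (x d : ZMod p) (m : ℕ) :
    apFinset x d (m + 2) = apFinset x d (m + 1) ∪ (apFinset x d (m + 1)).image (· + d) := by
  ext y
  simp only [Finset.mem_union, Finset.mem_image, mem_apFinset]
  constructor
  · rintro ⟨i, hi, rfl⟩
    rcases Nat.lt_or_ge i (m + 1) with h | h
    · exact Or.inl ⟨i, h, rfl⟩
    · refine Or.inr ⟨x + (i - 1) • d, ⟨i - 1, by omega, rfl⟩, ?_⟩
      have : i - 1 + 1 = i := by omega
      rw [add_assoc, ← succ_nsmul, this]
  · rintro (⟨i, hi, rfl⟩ | ⟨y, ⟨i, hi, rfl⟩, rfl⟩)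
    · exact ⟨i, by omega, rfl⟩
    · exact ⟨i + 1, by omega, by rw [add_assoc, ← succ_nsmul]⟩

lemma add_image_add (A S : Finset (ZMod p)) (d : ZMod p) :
    A + S.image (· + d) = (A + S).image (· + d) := by
  ext y
  simp only [Finset.mem_image, Finset.mem_add]
  constructor
  · rintro ⟨u, hu, v, ⟨w, hw, rfl⟩, rfl⟩
    exact ⟨u + w, ⟨u, hu, w, hw, rfl⟩, by ring⟩
  · rintro ⟨z, ⟨u, hu, v, hv, rfl⟩, rfl⟩
    exact ⟨u, hu, v + d, ⟨v, hv, rfl⟩, by ring⟩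

/-- Growth lemma: `|A + P|` grows with the length of the progression `P`. -/
lemma sum_ap_growth {A : Finset (ZMod p)} {x d : ZMod p} (hd : d ≠ 0) (hA : A.Nonempty) :
    ∀ m : ℕ, min p ((A + apFinset x d 2).card + m) ≤ (A + apFinset x d (m + 2)).card := by
  intro m
  induction m with
  | zero => simp
  | succ n ih =>
    have hsplit : A + apFinset x d (n + 1 + 2) =
        (A + apFinset x d (n + 2)) ∪ (A + apFinset x d (n + 2)).image (· + d) := by
      rw [show n + 1 + 2 = (n+1) + 2 by omega, apFinset_succ_eq x d (n+1),
        Finset.add_union, add_image_add, show n + 1 + 1 = n + 2 by omega]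
    set T := A + apFinset x d (n + 2) with hT
    have hTne : T.Nonempty := by
      refine Finset.Nonempty.add hA ?_
      exact ⟨x, mem_apFinset.2 ⟨0, by omega, by simp⟩⟩
    rcases eq_or_ne (T.image (· + d)) T with heq | hne
    · have hple : p ≤ T.card := card_ge_of_shift_invariant hd hTne heq
      calc min p ((A + apFinset x d 2).card + (n+1)) ≤ p := min_le_left _ _
        _ ≤ T.card := hple
        _ ≤ (A + apFinset x d (n + 1 + 2)).card := by
            rw [hsplit]; exact Finset.card_le_card Finset.subset_union_left
    · -- there is a new element
      have hcard : T.card + 1 ≤ (T ∪ T.image (· + d)).card := by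
        have himgcard : (T.image (· + d)).card = T.card :=
          Finset.card_image_of_injOn (fun u _ v _ h => add_right_cancel h)
        have : ¬ (T.image (· + d) ⊆ T) := fun hsub =>
          hne (Finset.eq_of_subset_of_card_le hsub himgcard.ge)
        obtain ⟨y, hy, hyn⟩ := Finset.not_subset.1 this
        have : insert y T ⊆ T ∪ T.image (· + d) := by
          intro z hz
          rcases Finset.mem_insert.1 hz with rfl | hz
          · exact Finset.mem_union_right _ hy
          · exact Finset.mem_union_left _ hz
        calc T.card + 1 = (insert y T).card := (Finset.card_insert_of_notMem hyn).symm
          _ ≤ _ := Finset.card_le_card this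
      rw [hsplit]
      rcases Nat.le_total p ((A + apFinset x d 2).card + n) with h | h
      · calc min p ((A + apFinset x d 2).card + (n+1)) ≤ p := min_le_left _ _
          _ ≤ T.card + 1 := by
              have := ih; rw [min_eq_left h] at this; omega
          _ ≤ _ := hcard
      · have := ih; rw [min_eq_right h] at this
        calc min p ((A + apFinset x d 2).card + (n+1)) ≤ (A + apFinset x d 2).card + (n+1) :=
              min_le_right _ _
          _ ≤ T.card + 1 := by omega
          _ ≤ _ := hcard

/-- Lemma 2: if `|A + P| = |A| + |P| - 1 < p` for an AP `P` of length `≥ 2` and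
difference `d`, then `A` is an AP with difference `d`. -/
lemma ap_of_critical_ap_summand {A : Finset (ZMod p)} {x d : ZMod p} {m : ℕ} (hd : d ≠ 0)
    (hA : A.Nonempty) (hm : 2 ≤ m)
    (hcard : (A + apFinset x d m).card + 1 = A.card + m)
    (hlt : (A + apFinset x d m).card < p) :
    ∃ a, A = apFinset a d A.card := by
  obtain ⟨m', rfl⟩ : ∃ m', m = m' + 2 := ⟨m - 2, by omega⟩
  have hgrow := sum_ap_growth (x := x) hd hA m'
  have h2le : (A + apFinset x d 2).card + m' ≤ A.card + m' + 1 := by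
    rcases Nat.le_total p ((A + apFinset x d 2).card + m') with h | h
    · rw [min_eq_left h] at hgrow; omega
    · rw [min_eq_right h] at hgrow; omega
  -- translate: A + apFinset x d 2 is a translate of A ∪ (A + d)
  have htrans : A + apFinset x d 2 = (A ∪ A.image (· + d)).image (· + x) := by
    ext y
    simp only [Finset.mem_add, Finset.mem_image, Finset.mem_union, mem_apFinset]
    constructor
    · rintro ⟨u, hu, v, ⟨i, hi, rfl⟩, rfl⟩
      interval_cases i
      · exact ⟨u, Or.inl hu, by simp⟩
      · exact ⟨u + d, Or.inr ⟨u, hu, rfl⟩, by rw [one_smul]; ring⟩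
    · rintro ⟨u, hu | ⟨w, hw, rfl⟩, rfl⟩
      · exact ⟨u, hu, x, ⟨0, by omega, by simp⟩, rfl⟩
      · exact ⟨w, hw, x + d, ⟨1, by omega, by rw [one_smul]⟩, by ring⟩
  have hucard : (A ∪ A.image (· + d)).card ≤ A.card + 1 := by
    have := Finset.card_image_of_injOn
      (s := A ∪ A.image (· + d)) (f := (· + x)) (fun u _ v _ h => add_right_cancel h)
    rw [← htrans] at this
    omega
  have hAcard : A.card < p := by
    have hsub : A + ({x} : Finset (ZMod p)) ⊆ A + apFinset x d (m' + 2) := by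
      apply Finset.add_subset_add_left
      intro y hy
      rw [Finset.mem_singleton] at hy
      exact mem_apFinset.2 ⟨0, by omega, by simp [hy]⟩
    have := Finset.card_le_card hsub
    rw [Finset.card_add_singleton] at this
    omega
  exact ap_of_small_boundary hd hA hAcard hucard

/-- Sum of two APs with the same difference. -/
lemma apFinset_add_apFinset (a b d : ZMod p) (k l : ℕ) :
    apFinset a d (k + 1) + apFinset b d (l + 1) = apFinset (a + b) d (k + l + 1) := by
  ext y
  simp only [Finset.mem_add, mem_apFinset]
  constructor
  · rintro ⟨u, ⟨i, hi, rfl⟩, v, ⟨j, hj, rfl⟩, rfl⟩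
    exact ⟨i + j, by omega, by rw [add_nsmul]; ring⟩
  · rintro ⟨n, hn, rfl⟩
    refine ⟨a + (min n k) • d, ⟨min n k, by omega, rfl⟩,
      b + (n - min n k) • d, ⟨n - min n k, by omega, rfl⟩, ?_⟩
    rw [show a + min n k • d + (b + (n - min n k) • d)
      = a + b + (min n k • d + (n - min n k) • d) by ring, ← add_nsmul]
    congr 2
    omega

lemma apFinset_rev (a d : ZMod p) (k : ℕ) :
    apFinset a d (k + 1) = apFinset (a + k • d) (-d) (k + 1) := by
  ext y
  simp only [mem_apFinset]
  constructor
  · rintro ⟨i, hi, rfl⟩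
    refine ⟨k - i, by omega, ?_⟩
    have : k • d = i • d + (k - i) • d := by rw [← add_nsmul]; congr 1; omega
    rw [this, smul_neg]
    ring
  · rintro ⟨i, hi, rfl⟩
    refine ⟨k - i, by omega, ?_⟩
    have : k • d = (k - i) • d + i • d := by rw [← add_nsmul]; congr 1; omega
    rw [this, smul_neg]
    ring

lemma apFinset_neg (a d : ZMod p) (k : ℕ) :
    -(apFinset a d k) = apFinset (-a) (-d) k := by
  ext y
  simp only [Finset.mem_neg, mem_apFinset]
  constructor
  · rintro ⟨u, ⟨i, hi, rfl⟩, rfl⟩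
    exact ⟨i, hi, by rw [smul_neg]; ring⟩
  · rintro ⟨i, hi, rfl⟩
    exact ⟨a + i • d, ⟨i, hi, rfl⟩, by rw [smul_neg]; ring⟩

/-- Complement of an AP is an AP with the same difference. -/
lemma apFinset_compl {a d : ZMod p} (hd : d ≠ 0) {m : ℕ} (hm : m ≤ p) :
    (apFinset a d m)ᶜ = apFinset (a + m • d) d (p - m) := by
  haveI : NeZero p := ⟨hp.out.pos.ne'⟩
  have hsub : apFinset (a + m • d) d (p - m) ⊆ (apFinset a d m)ᶜ := by
    intro y hy
    obtain ⟨j, hj, rfl⟩ := mem_apFinset.1 hy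
    rw [Finset.mem_compl]
    intro hmem
    obtain ⟨i, hi, heq⟩ := mem_apFinset.1 hmem
    rw [add_assoc, ← add_nsmul] at heq
    have := smul_cancel hd (by omega : i < p) (by omega : m + j < p)
      (add_left_cancel heq).symm
    omega
  apply (Finset.eq_of_subset_of_card_le hsub ?_).symm
  rw [Finset.card_compl, apFinset_card hd hm, apFinset_card hd (by omega)]
  simp [ZMod.card]

/-- Cauchy–Davenport, convenient form. -/
lemma cd {A B : Finset (ZMod p)} (hA : A.Nonempty) (hB : B.Nonempty)
    (h : A.card + B.card ≤ p) : A.card + B.card ≤ (A + B).card + 1 := by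
  have := ZMod.cauchy_davenport hp.out hA hB
  have h1 : 1 ≤ A.card := Finset.card_pos.2 hA
  have h1' : 1 ≤ B.card := Finset.card_pos.2 hB
  rcases Nat.le_total p (A.card + B.card - 1) with h' | h'
  · rw [min_eq_left h'] at this; omega
  · rw [min_eq_right h'] at this; omega

/-- Lemma 3 (complement trick). -/
lemma compl_sum {A B : Finset (ZMod p)} (hA : A.Nonempty) (hB : B.Nonempty)
    (hcrit : (A + B).card + 1 = A.card + B.card)
    (hsize : A.card + B.card ≤ p - 1) :
    A + (-((A + B)ᶜ)) = (-B)ᶜ := by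
  haveI : NeZero p := ⟨hp.out.pos.ne'⟩
  have hp5 : 2 ≤ p := hp.out.two_le
  set C := (A + B)ᶜ with hC
  have hCcard : C.card = p - (A + B).card := by
    rw [hC, Finset.card_compl]; simp [ZMod.card]
  have hCne : C.Nonempty := by
    rw [← Finset.card_pos, hCcard]; omega
  have hnegC : (-C).card = C.card := by
    simp [Finset.card_neg]
  have hsub : A + (-C) ⊆ (-B)ᶜ := by
    intro x hx
    obtain ⟨a, ha, c', hc', rfl⟩ := Finset.mem_add.1 hx
    obtain ⟨c, hc, rfl⟩ := Finset.mem_neg.1 hc'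
    rw [Finset.mem_compl]
    intro hmem
    obtain ⟨b, hb, hbe⟩ := Finset.mem_neg.1 hmem
    have : c = a + b := by linear_combination hbe
    rw [hC] at hc
    exact (Finset.mem_compl.1 hc) (this ▸ Finset.add_mem_add ha hb)
  have hrhscard : ((-B)ᶜ).card = p - B.card := by
    rw [Finset.card_compl, Finset.card_neg]; simp [ZMod.card]
  apply Finset.eq_of_subset_of_card_le hsub
  have h1 : 1 ≤ A.card := Finset.card_pos.2 hA
  have h1' : 1 ≤ B.card := Finset.card_pos.2 hB
  have hcd := cd hA (hCne.neg) (by rw [hnegC, hCcard]; omega)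
  rw [hnegC, hCcard] at hcd
  omega

/-- If `A` is an AP with difference `e` and `(A,B)` is a critical pair, then `A + B` is an
AP with difference `e`. -/
lemma final_step {A B : Finset (ZMod p)} {a e : ZMod p} (he : e ≠ 0)
    (hA2 : 2 ≤ A.card) (hB2 : 2 ≤ B.card)
    (hcrit : (A + B).card + 1 = A.card + B.card)
    (hsize : A.card + B.card ≤ p - 1)
    (hAap : A = apFinset a e A.card) :
    ∃ x, A + B = apFinset x e ((A + B).card) := by
  have hBne : B.Nonempty := Finset.card_pos.1 (by omega)
  have hBA : B + A = A + B := add_comm B A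
  have hcard' : (B + apFinset a e A.card).card + 1 = B.card + A.card := by
    rw [← hAap, hBA]; omega
  have hlt : (B + apFinset a e A.card).card < p := by
    rw [← hAap, hBA]; omega
  obtain ⟨b, hBap⟩ := ap_of_critical_ap_summand he hBne hA2 hcard' hlt
  refine ⟨a + b, ?_⟩
  obtain ⟨k, hk⟩ : ∃ k, A.card = k + 1 := ⟨A.card - 1, by omega⟩
  obtain ⟨l, hl⟩ : ∃ l, B.card = l + 1 := ⟨B.card - 1, by omega⟩
  have hkl : (A + B).card = k + l + 1 := by omega
  rw [hkl]
  nth_rewrite 1 [hAap, hBap, hk, hl]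
  exact apFinset_add_apFinset a b e k l

lemma image_add_cancel (s : Finset (ZMod p)) (t : ZMod p) :
    (s.image (· + t)).image (· + (-t)) = s := by
  rw [Finset.image_image]
  have : ((· + (-t)) ∘ (· + t)) = (id : ZMod p → ZMod p) := by funext x; simp
  rw [this, Finset.image_id]

lemma card_image_add (s : Finset (ZMod p)) (t : ZMod p) :
    (s.image (· + t)).card = s.card :=
  Finset.card_image_of_injOn (fun u _ v _ h => add_right_cancel h)

/-- Main lemma: the sumset of a critical pair is an AP. -/
lemma sum_is_ap : ∀ n : ℕ, ∀ A B : Finset (ZMod p),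
    (p + 1) * min A.card B.card + (A.card + B.card) ≤ n →
    2 ≤ A.card → 2 ≤ B.card →
    (A + B).card + 1 = A.card + B.card →
    A.card + B.card ≤ p - 1 →
    ∃ x d, d ≠ 0 ∧ A + B = apFinset x d ((A + B).card) := by
  intro n
  induction n using Nat.strong_induction_on with
  | _ n IH =>
  have key : ∀ A B : Finset (ZMod p),
      (p + 1) * min A.card B.card + (A.card + B.card) ≤ n →
      2 ≤ A.card → 2 ≤ B.card →
      (A + B).card + 1 = A.card + B.card →
      A.card + B.card ≤ p - 1 →
      B.card ≤ A.card →
      ∃ x d, d ≠ 0 ∧ A + B = apFinset x d ((A + B).card) := by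
    intro A B hn hA2 hB2 hcrit hsize hBA
    have hAne : A.Nonempty := Finset.card_pos.1 (by omega)
    have hBne : B.Nonempty := Finset.card_pos.1 (by omega)
    have hp2 : 2 ≤ p := hp.out.two_le
    have hminAB : min A.card B.card = B.card := min_eq_right hBA
    rcases eq_or_lt_of_le hB2 with hB2' | hB3
    · -- base case |B| = 2
      obtain ⟨b1, b2, hne, hBeq⟩ := Finset.card_eq_two.1 hB2'.symm
      set d := b2 - b1 with hd'
      have hd : d ≠ 0 := sub_ne_zero.2 hne.symm
      have hABeq : A + B = (A ∪ A.image (· + d)).image (· + b1) := by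
        ext y
        simp only [Finset.mem_add, hBeq, Finset.mem_insert, Finset.mem_singleton,
          Finset.mem_image, Finset.mem_union]
        constructor
        · rintro ⟨u, hu, v, (rfl | rfl), rfl⟩
          · exact ⟨u, Or.inl hu, rfl⟩
          · exact ⟨u + d, Or.inr ⟨u, hu, rfl⟩, by rw [hd']; ring⟩
        · rintro ⟨u, hu | ⟨w, hw, rfl⟩, rfl⟩
          · exact ⟨u, hu, b1, Or.inl rfl, rfl⟩
          · exact ⟨w, hw, b2, Or.inr rfl, by rw [hd']; ring⟩
      have hucard : (A ∪ A.image (· + d)).card ≤ A.card + 1 := by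
        have h1 := card_image_add (A ∪ A.image (· + d)) b1
        rw [← hABeq] at h1
        omega
      obtain ⟨a, hAap⟩ := ap_of_small_boundary hd hAne (by omega) hucard
      obtain ⟨x, hfin⟩ := final_step hd hA2 hB2 hcrit hsize hAap
      exact ⟨x, d, hd, hfin⟩
    · -- |B| ≥ 3
      by_cases hgood : ∃ a ∈ A, ∃ b ∈ B,
          2 ≤ (B ∩ A.image (· + (b - a))).card ∧ (B ∩ A.image (· + (b - a))).card < B.card
      · -- e-transform case
        obtain ⟨a, ha, b, hb, h2B', hltB'⟩ := hgood
        set B' := B ∩ A.image (· + (b - a)) with hB'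
        set A' := A ∪ B.image (· + (a - b)) with hA'
        have himg : B'.image (· + (a - b)) = B.image (· + (a - b)) ∩ A := by
          ext y
          simp only [Finset.mem_image, Finset.mem_inter, hB', Finset.mem_image]
          constructor
          · rintro ⟨x, ⟨hxB, ⟨a'', ha'', hxe⟩⟩, rfl⟩
            refine ⟨⟨x, hxB, rfl⟩, ?_⟩
            have : x + (a - b) = a'' := by rw [← hxe]; ring
            rwa [this]
          · rintro ⟨⟨b'', hb'', rfl⟩, hyA⟩
            exact ⟨b'', ⟨hb'', ⟨b'' + (a - b), hyA, by ring⟩⟩, rfl⟩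
        have hB'card : B'.card = (A ∩ B.image (· + (a - b))).card := by
          rw [← card_image_add B' (a - b), himg, Finset.inter_comm]
        have hBimgcard := card_image_add B (a - b)
        have hcards : A'.card + B'.card = A.card + B.card := by
          have := Finset.card_union_add_card_inter A (B.image (· + (a - b)))
          rw [← hA'] at this
          omega
        have hsub : A' + B' ⊆ A + B := by
          intro x hx
          obtain ⟨u, hu, v, hv, rfl⟩ := Finset.mem_add.1 hx
          obtain ⟨hvB, hvimg⟩ := Finset.mem_inter.1 hv
          rcases Finset.mem_union.1 hu with huA | huimg
          · exact Finset.add_mem_add huA hvB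
          · obtain ⟨b'', hb'', rfl⟩ := Finset.mem_image.1 huimg
            obtain ⟨a'', ha'', rfl⟩ := Finset.mem_image.1 hvimg
            have : b'' + (a - b) + (a'' + (b - a)) = a'' + b'' := by ring
            rw [this]
            exact Finset.add_mem_add ha'' hb''
        have hB'ne : B'.Nonempty := Finset.card_pos.1 (by omega)
        have hA'ne : A'.Nonempty := hAne.mono Finset.subset_union_left
        have hcd' := cd hA'ne hB'ne (by omega)
        have heq : A' + B' = A + B := by
          apply Finset.eq_of_subset_of_card_le hsub
          omega
        have hcrit' : (A' + B').card + 1 = A'.card + B'.card := by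
          rw [heq]; omega
        have hA'2 : 2 ≤ A'.card := le_trans hA2 (Finset.card_le_card Finset.subset_union_left)
        have hμ : (p + 1) * min A'.card B'.card + (A'.card + B'.card) < n := by
          have hminle : min A'.card B'.card ≤ B'.card := min_le_right _ _
          have hmul : (p + 1) * (B'.card + 1) ≤ (p + 1) * B.card :=
            Nat.mul_le_mul_left _ (by omega)
          have e1 : (p + 1) * min A'.card B'.card ≤ (p + 1) * B'.card :=
            Nat.mul_le_mul_left _ hminle
          have e2 : (p + 1) * B'.card + (p + 1) = (p + 1) * (B'.card + 1) := by ring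
          rw [hminAB] at hn
          omega
        obtain ⟨x, d, hd, hap⟩ := IH _ hμ A' B' le_rfl hA'2 (by omega) hcrit' (by omega)
        rw [heq] at hap
        exact ⟨x, d, hd, hap⟩
      · -- failing case
        push_neg at hgood
        have hdich : ∀ a ∈ A, ∀ b ∈ B,
            (∀ b' ∈ B, b' + (a - b) ∈ A) ∨ (∀ b' ∈ B, b' ≠ b → b' + (a - b) ∉ A) := by
          intro a ha b hb
          have hbmem : b ∈ B ∩ A.image (· + (b - a)) :=
            Finset.mem_inter.2 ⟨hb, Finset.mem_image.2 ⟨a, ha, by ring⟩⟩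
          rcases Nat.lt_or_ge (B ∩ A.image (· + (b - a))).card 2 with hc | hc
          · right
            intro b' hb' hne hmem
            have hmem' : b' ∈ B ∩ A.image (· + (b - a)) :=
              Finset.mem_inter.2 ⟨hb', Finset.mem_image.2 ⟨b' + (a - b), hmem, by ring⟩⟩
            have := Finset.one_lt_card.2 ⟨b', hmem', b, hbmem, hne⟩
            omega
          · left
            have hge := hgood a ha b hb hc
            have heqB : B ∩ A.image (· + (b - a)) = B :=
              Finset.eq_of_subset_of_card_le Finset.inter_subset_left (by omega)
            intro b' hb'
            have hmem : b' ∈ B ∩ A.image (· + (b - a)) := by rw [heqB]; exact hb'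
            obtain ⟨a'', ha'', he⟩ := Finset.mem_image.1 (Finset.mem_inter.1 hmem).2
            have : b' + (a - b) = a'' := by rw [← he]; ring
            rwa [this]
        classical
        set Ab : ZMod p → Finset (ZMod p) :=
          fun b => A.filter (fun a => ∀ b' ∈ B, b' + (a - b) ∈ A) with hAbdef
        have hstep1 : ∀ b ∈ B, ∀ b' ∈ B, b' ≠ b → ∀ a ∈ A, a + (b' - b) ∈ A → a ∈ Ab b := by
          intro b hb b' hb' hne a ha hmem
          rcases hdich a ha b hb with h | h
          · exact Finset.mem_filter.2 ⟨ha, h⟩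
          · exact absurd (show b' + (a - b) ∈ A by
              rw [show b' + (a - b) = a + (b' - b) by ring]; exact hmem) (h b' hb' hne)
        have hsub2 : ∀ b, Ab b + B ⊆ A.image (· + b) := by
          intro b x hx
          obtain ⟨u, hu, v, hv, rfl⟩ := Finset.mem_add.1 hx
          have := (Finset.mem_filter.1 hu).2 v hv
          exact Finset.mem_image.2 ⟨v + (u - b), this, by ring⟩
        have hAbB : ∀ b, (Ab b).Nonempty → (Ab b + B).card ≤ A.card := by
          intro b _
          have h1 := Finset.card_le_card (hsub2 b)
          rwa [card_image_add] at h1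
        have hAbsubA : ∀ b, Ab b ⊆ A := fun b => Finset.filter_subset _ _
        have hstep2 : ∀ b, (Ab b).Nonempty → (Ab b).card + B.card ≤ A.card + 1 := by
          intro b hne
          have h1 := hAbB b hne
          have hle := Finset.card_le_card (hAbsubA b)
          have h2 := cd hne hBne (by omega)
          omega
        have hstep3 : ∀ b ∈ B, ∀ b' ∈ B, b' ≠ b →
            A.card + 1 ≤ (A ∩ A.image (· + (b - b'))).card + B.card := by
          intro b hb b' hb' hne
          have hsubu : A ∪ A.image (· + (b - b')) ⊆ (A + B).image (· + (0 - b')) := by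
            intro x hx
            rcases Finset.mem_union.1 hx with hx | hx
            · exact Finset.mem_image.2 ⟨x + b', Finset.add_mem_add hx hb', by ring⟩
            · obtain ⟨a'', ha'', rfl⟩ := Finset.mem_image.1 hx
              exact Finset.mem_image.2 ⟨a'' + b, Finset.add_mem_add ha'' hb, by ring⟩
          have hcu : (A ∪ A.image (· + (b - b'))).card ≤ (A + B).card := by
            have h1 := Finset.card_le_card hsubu
            rwa [card_image_add] at h1
          have hicard := card_image_add A (b - b')
          have h1 := Finset.card_inter_add_card_union A (A.image (· + (b - b')))
          omega
        have hstep4 : ∀ b ∈ B, ((Ab b).card + B.card = A.card + 1 ∧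
            Ab b + B = A.image (· + b)) := by
          intro b hb
          obtain ⟨b', hb', hne⟩ := Finset.exists_mem_ne (s := B) (by omega) b
          have hsub14 : A ∩ A.image (· + (b - b')) ⊆ Ab b := by
            intro x hx
            obtain ⟨hxA, hxi⟩ := Finset.mem_inter.1 hx
            obtain ⟨a'', ha'', he⟩ := Finset.mem_image.1 hxi
            apply hstep1 b hb b' hb' hne x hxA
            have : x + (b' - b) = a'' := by rw [← he]; ring
            rwa [this]
          have h3 := hstep3 b hb b' hb' hne
          have hic := Finset.card_le_card hsub14
          have hAbne : (Ab b).Nonempty := Finset.card_pos.1 (by omega)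
          have h2B := hstep2 b hAbne
          have hcardAb : (Ab b).card + B.card = A.card + 1 := by omega
          have hcd4 := cd hAbne hBne (by omega)
          refine ⟨hcardAb, Finset.eq_of_subset_of_card_le (hsub2 b) ?_⟩
          rw [card_image_add]
          omega
        obtain ⟨b, hb⟩ := id hBne
        obtain ⟨hcardAb, hrecon⟩ := hstep4 b hb
        rcases Nat.lt_or_ge 1 (Ab b).card with hAb2 | hAb1
        · -- |Ab b| ≥ 2 : recurse on the pair (Ab b, B)
          have hcrit' : (Ab b + B).card + 1 = (Ab b).card + B.card := by
            rw [hrecon, card_image_add]; omega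
          have hsize'' : (Ab b).card + B.card ≤ p - 1 := by omega
          have hμ : (p + 1) * min (Ab b).card B.card + ((Ab b).card + B.card) < n := by
            have e1 : (p + 1) * min (Ab b).card B.card ≤ (p + 1) * B.card :=
              Nat.mul_le_mul_left _ (min_le_right _ _)
            rw [hminAB] at hn
            omega
          obtain ⟨x, d, hd, hap⟩ := IH _ hμ (Ab b) B le_rfl (by omega) hB2 hcrit' hsize''
          have hcc : (Ab b + B).card = A.card := by rw [hrecon, card_image_add]
          rw [hcc, hrecon] at hap
          have hAap : A = apFinset (x + (-b)) d A.card := by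
            have h5 := congrArg (fun s => Finset.image (· + (-b)) s) hap
            rw [image_add_cancel, apFinset_image_add] at h5
            exact h5
          obtain ⟨y, hfin⟩ := final_step hd hA2 hB2 hcrit hsize hAap
          exact ⟨y, d, hd, hfin⟩
        · -- |Ab b| = 1 : Sidon-set contradiction
          exfalso
          have hABcard : A.card = B.card := by omega
          have hkey : ∀ b₂ ∈ B, ∃ a2, Ab b₂ = {a2} ∧ A = B.image (· + (a2 - b₂)) := by
            intro b₂ hb₂
            obtain ⟨hc₂, hr₂⟩ := hstep4 b₂ hb₂
            have h1 : (Ab b₂).card = 1 := by omega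
            obtain ⟨a2, ha2⟩ := Finset.card_eq_one.1 h1
            refine ⟨a2, ha2, ?_⟩
            rw [ha2] at hr₂
            have h2 : ({a2} : Finset (ZMod p)) + B = B.image (· + a2) := by
              ext y
              simp only [Finset.mem_add, Finset.mem_singleton, Finset.mem_image]
              constructor
              · rintro ⟨u, rfl, v, hv, rfl⟩; exact ⟨v, hv, by ring⟩
              · rintro ⟨v, hv, rfl⟩; exact ⟨a2, rfl, v, hv, by ring⟩
            rw [h2] at hr₂
            -- hr₂ : B.image (· + a2) = A.image (· + b₂)
            ext y
            simp only [Finset.mem_image]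
            constructor
            · intro hy
              have : y + b₂ ∈ A.image (· + b₂) := Finset.mem_image_of_mem _ hy
              rw [← hr₂] at this
              obtain ⟨v, hv, he⟩ := Finset.mem_image.1 this
              exact ⟨v, hv, by linear_combination he⟩
            · rintro ⟨v, hv, rfl⟩
              have : v + a2 ∈ B.image (· + a2) := Finset.mem_image_of_mem _ hv
              rw [hr₂] at this
              obtain ⟨a'', ha'', he⟩ := Finset.mem_image.1 this
              have : v + (a2 - b₂) = a'' := by linear_combination -he
              rwa [this]
          obtain ⟨a0, hAb0, hA0⟩ := hkey b hb
          set c := a0 - b with hc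
          have hconst : ∀ b₂ ∈ B, Ab b₂ = {c + b₂} := by
            intro b₂ hb₂
            obtain ⟨a2, ha2, hA2'⟩ := hkey b₂ hb₂
            have heqc : a2 - b₂ = c := by
              apply translate_inj hBne (by omega : B.card < p)
              rw [← hA2', ← hA0]
            rw [ha2]
            congr 1
            rw [← heqc]
            ring
          have hsidon : ∀ b1 ∈ B, ∀ b2 ∈ B, ∀ b3 ∈ B, ∀ b4 ∈ B,
              b1 + b2 = b3 + b4 → (b1 = b3 ∧ b2 = b4) ∨ (b1 = b4 ∧ b2 = b3) := by
            intro b1 h1 b2 h2 b3 h3 b4 h4 hsum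
            rcases eq_or_ne b2 b4 with rfl | hne24
            · left; exact ⟨by linear_combination hsum, rfl⟩
            · right
              have hmem : c + b1 ∈ Ab b4 := by
                apply hstep1 b4 h4 b2 h2 hne24 (c + b1)
                · rw [hA0]; exact Finset.mem_image.2 ⟨b1, h1, by ring⟩
                · rw [hA0]
                  exact Finset.mem_image.2 ⟨b3, h3, by linear_combination -hsum⟩
              rw [hconst b4 h4, Finset.mem_singleton] at hmem
              have h14 : b1 = b4 := by linear_combination hmem
              exact ⟨h14, by linear_combination hsum - hmem⟩
          -- |B + B| = 2|B| - 1
          have hBB : (B + B).card + 1 = B.card + B.card := by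
            have himg2 : A + B = (B + B).image (· + c) := by
              rw [hA0]
              ext y
              simp only [Finset.mem_add, Finset.mem_image]
              constructor
              · rintro ⟨u, ⟨w, hw, rfl⟩, v, hv, rfl⟩
                exact ⟨w + v, ⟨w, hw, v, hv, rfl⟩, by ring⟩
              · rintro ⟨z, ⟨w, hw, v, hv, rfl⟩, rfl⟩
                exact ⟨w + c, ⟨w, hw, rfl⟩, v, hv, by ring⟩
            have h6 := card_image_add (B + B) c
            rw [← himg2] at h6
            omega
          -- three distinct elements of B
          obtain ⟨b1, hb1⟩ := id hBne
          obtain ⟨b2, hb2, hne21⟩ := Finset.exists_mem_ne (s := B) (by omega) b1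
          have h12card : ({b1, b2} : Finset (ZMod p)).card ≤ 2 := by
            apply le_trans (Finset.card_insert_le _ _)
            simp
          have h3ne : (B \ {b1, b2}).Nonempty := by
            rw [← Finset.card_pos]
            have := Finset.le_card_sdiff ({b1, b2} : Finset (ZMod p)) B
            omega
          obtain ⟨b3, hb3s⟩ := h3ne
          have hb3 : b3 ∈ B := (Finset.mem_sdiff.1 hb3s).1
          have hb3n : b3 ≠ b1 ∧ b3 ≠ b2 := by
            have h7 := (Finset.mem_sdiff.1 hb3s).2
            simp only [Finset.mem_insert, Finset.mem_singleton] at h7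
            push_neg at h7
            exact h7
          set F1 := B.image (b1 + ·) with hF1
          set F2 := (B.erase b1).image (b2 + ·) with hF2
          have hF1c : F1.card = B.card :=
            Finset.card_image_of_injOn (fun u _ v _ h => add_left_cancel h)
          have hF2c : F2.card = B.card - 1 := by
            rw [hF2, Finset.card_image_of_injOn (fun u _ v _ h => add_left_cancel h),
              Finset.card_erase_of_mem hb1]
          have hd12 : Disjoint F1 F2 := by
            rw [Finset.disjoint_left]
            rintro x hx1 hx2
            obtain ⟨u, hu, rfl⟩ := Finset.mem_image.1 hx1
            obtain ⟨v, hv, he⟩ := Finset.mem_image.1 hx2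
            have hvB := Finset.mem_of_mem_erase hv
            have hvne := Finset.ne_of_mem_erase hv
            rcases hsidon b2 hb2 v hvB b1 hb1 u hu he with ⟨h7, -⟩ | ⟨-, h7⟩
            · exact hne21 h7
            · exact hvne h7
          have hd3 : b3 + b3 ∉ F1 ∪ F2 := by
            intro hmem
            rcases Finset.mem_union.1 hmem with hm | hm
            · obtain ⟨u, hu, he⟩ := Finset.mem_image.1 hm
              rcases hsidon b1 hb1 u hu b3 hb3 b3 hb3 he with ⟨h7, -⟩ | ⟨h7, -⟩ <;>
                exact hb3n.1 h7.symm
            · obtain ⟨v, hv, he⟩ := Finset.mem_image.1 hm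
              rcases hsidon b2 hb2 v (Finset.mem_of_mem_erase hv) b3 hb3 b3 hb3 he with
                ⟨h7, -⟩ | ⟨h7, -⟩ <;> exact hb3n.2 h7.symm
          have hsubBB : F1 ∪ F2 ∪ {b3 + b3} ⊆ B + B := by
            intro x hx
            rcases Finset.mem_union.1 hx with hx | hx
            · rcases Finset.mem_union.1 hx with hx | hx
              · obtain ⟨u, hu, rfl⟩ := Finset.mem_image.1 hx
                exact Finset.add_mem_add hb1 hu
              · obtain ⟨v, hv, rfl⟩ := Finset.mem_image.1 hx
                exact Finset.add_mem_add hb2 (Finset.mem_of_mem_erase hv)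
            · rw [Finset.mem_singleton.1 hx]
              exact Finset.add_mem_add hb3 hb3
          have hdisj3 : Disjoint (F1 ∪ F2) {b3 + b3} := by
            rw [Finset.disjoint_singleton_right]; exact hd3
          have hcount : (F1 ∪ F2 ∪ {b3 + b3}).card = B.card + (B.card - 1) + 1 := by
            rw [Finset.card_union_of_disjoint hdisj3, Finset.card_union_of_disjoint hd12,
              hF1c, hF2c, Finset.card_singleton]
          have h8 := Finset.card_le_card hsubBB
          omega
  intro A B hn hA2 hB2 hcrit hsize
  rcases le_total B.card A.card with h | h
  · exact key A B hn hA2 hB2 hcrit hsize h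
  · obtain ⟨x, d, hd, hx⟩ := key B A (by rw [Nat.min_comm] at hn; omega) hB2 hA2
      (by rwa [add_comm B A, Nat.add_comm B.card A.card]) (by omega) h
    exact ⟨x, d, hd, by rwa [add_comm B A] at hx⟩

theorem stmt18' (A B : Finset (ZMod p))
    (hA : A.Nonempty) (hB : B.Nonempty)
    (hsize : A.card + B.card ≤ p - 1)
    (hAB : (A + B).card + 1 = A.card + B.card)
    (hmin : 2 ≤ min A.card B.card) :
    ∃ d : ZMod p, d ≠ 0 ∧ (∃ (a : ZMod p) (k : ℕ), A = apFinset a d k) ∧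
      (∃ (b : ZMod p) (k' : ℕ), B = apFinset b d k') := by
  haveI : NeZero p := ⟨hp.out.pos.ne'⟩
  have hA2 : 2 ≤ A.card := le_trans hmin (min_le_left _ _)
  have hB2 : 2 ≤ B.card := le_trans hmin (min_le_right _ _)
  have hp2 : 2 ≤ p := hp.out.two_le
  have hp5 : 5 ≤ p := by omega
  obtain ⟨x, d, hd, hap⟩ := sum_is_ap _ A B le_rfl hA2 hB2 hAB hsize
  set k := (A + B).card with hk
  have hk3 : 3 ≤ k := by omega
  have hkp : k ≤ p - 2 := by omega
  -- the complement of A + B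
  have hcompl : (A + B)ᶜ = apFinset (x + k • d) d (p - k) := by
    rw [hap]; exact apFinset_compl hd (by omega)
  have hneg : -((A + B)ᶜ) = apFinset (-(x + k • d)) (-d) (p - k) := by
    rw [hcompl, apFinset_neg]
  have hbig : ∀ C D : Finset (ZMod p), C.Nonempty → D.Nonempty →
      2 ≤ C.card → 2 ≤ D.card → (C + D).card + 1 = C.card + D.card →
      C + D = A + B → ∃ a', C = apFinset a' d C.card := by
    intro C D hCne hDne hC2 hD2 hcrit' hCD
    have hCDk : (C + D).card = k := by rw [hCD]
    have hsize' : C.card + D.card ≤ p - 1 := by omega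
    have hcs := compl_sum hCne hDne hcrit' hsize'
    rw [hCD, hneg] at hcs
    have hrc : ((-D)ᶜ).card = p - D.card := by
      rw [Finset.card_compl, Finset.card_neg]; simp [ZMod.card]
    have hcard' : (C + apFinset (-(x + k • d)) (-d) (p - k)).card + 1 = C.card + (p - k) := by
      rw [hcs, hrc]
      omega
    have hlt : (C + apFinset (-(x + k • d)) (-d) (p - k)).card < p := by
      rw [hcs, hrc]; omega
    obtain ⟨a', ha'⟩ := ap_of_critical_ap_summand (neg_ne_zero.2 hd) hCne (by omega)
      hcard' hlt
    -- convert difference -d to d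
    obtain ⟨m', hm'⟩ : ∃ m', C.card = m' + 1 := ⟨C.card - 1, by omega⟩
    rw [hm'] at ha'
    rw [apFinset_rev, neg_neg] at ha'
    exact ⟨a' + m' • (-d), by rw [hm']; exact ha'⟩
  obtain ⟨a', hAeq⟩ := hbig A B hA hB hA2 hB2 hAB rfl
  obtain ⟨b', hBeq⟩ := hbig B A hB hA hB2 hA2 (by rw [add_comm B A]; omega)
    (add_comm B A)
  exact ⟨d, hd, ⟨a', A.card, hAeq⟩, ⟨b', B.card, hBeq⟩⟩


end VosperAux

theorem stmt18 (p : ℕ) [Fact p.Prime] (A B : Finset (ZMod p))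
    (hA : A.Nonempty) (hB : B.Nonempty)
    (hsize : A.card + B.card ≤ p - 1)
    (hAB : (A + B).card + 1 = A.card + B.card)
    (hmin : 2 ≤ min A.card B.card) :
    ∃ d : ZMod p, d ≠ 0 ∧ (∃ (a : ZMod p) (k : ℕ), A = apFinset a d k) ∧
      (∃ (b : ZMod p) (k' : ℕ), B = apFinset b d k') := by
  exact VosperAux.stmt18' A B hA hB hsize hAB hmin
end
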